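/- arXiv:2304.09757 — 7 statements merged into one kernel-verified Lean document; each statement's English description precedes it below -/
import Mathlib

section
/- Let Ω ⊂ ℝ^N be an open set, let q ∈ [1,∞) and let u ∈ BV^q_loc(Ω,ℝ^d). Then there exists a Borel set S ⊂ Ω that is σ-finite with respect to the Hausdorff measure H^{N-1} such that liminf_{ε→0+} ⨍_{B_ε(x)} |u(z) − u_{B_ε(x)}|^q dz = 0 for H^{N-1}-a.e. x ∈ Ω∖S, where u_{B_ε(x)} := ⨍_{B_ε(x)} u(w) dw. Equivalently, the set S''_u is a H^{N-1} σ-finite Borel set. -/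
/-!
By Jensen's inequality the mean oscillation `⨍_{B_ε(x)} |u - u_{B_ε(x)}|^q` is at most
`|B_ε|⁻² ∫_{B_ε(x)} ∫_{B_ε(x)} |u(y) - u(z)|^q`, so at a point where its `liminf` is positive
this double integral is at least `c ε^{2N}` for all small `ε`. Let `A` be a set on which such a
bound holds uniformly. Double integrals over disjoint balls `B_ε(b)` add up to at most
`(2ε)^{N+1}` times the Besov integral at scale `2ε`, which is bounded; hence a Vitali family of
disjoint balls centred in `A` has at most `C ε^{1-N}` members, and the enlarged balls `B_{4ε}(b)`
cover `A`, so `H^{N-1}(A) < ∞`. Countably many such sets (indexed by `c`, the range of scales and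
a compact exhaustion of `Ω`) cover the bad set, and their measurable hulls give the Borel set `S`.
-/

open MeasureTheory Metric Filter Set Topology
open scoped ENNReal NNReal

noncomputable section

/-- `ℝ^N` as a Euclidean space. -/
abbrev Euc (N : ℕ) : Type := EuclideanSpace ℝ (Fin N)

/-- The average `⨍_s f` of an `ℝ≥0∞`-valued function over a set `s`,
with respect to the Lebesgue measure. -/
def eavg {N : ℕ} (s : Set (Euc N)) (f : Euc N → ℝ≥0∞) : ℝ≥0∞ :=
  (∫⁻ y in s, f y) / volume s

/-- The double integral `∫_Ω ( ∫_{Ω ∩ B_ε(x)} (1/ε^N) |u(x)−u(y)|^q / |x−y| dy ) dx`. -/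
def besovInt (N d : ℕ) (Ω : Set (Euc N)) (u : Euc N → Euc d) (q ε : ℝ) : ℝ≥0∞ :=
  ∫⁻ x in Ω, ∫⁻ y in Ω ∩ ball x ε,
    (‖u x - u y‖₊ : ℝ≥0∞) ^ q / (ENNReal.ofReal (ε ^ N) * (‖x - y‖₊ : ℝ≥0∞))

/-- A set is `σ`-finite with respect to a measure `μ` if it can be covered by countably
many sets of finite `μ`-measure. -/
def SigmaFiniteWrt {N : ℕ} (μ : Measure (Euc N)) (S : Set (Euc N)) : Prop :=
  ∃ T : ℕ → Set (Euc N), S ⊆ (⋃ n, T n) ∧ ∀ n, μ (T n) < ⊤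

section Jensen

variable {α : Type*} [MeasurableSpace α] {μ : Measure α} [IsFiniteMeasure μ] [NeZero μ]

theorem rpow_laverage_le_laverage_rpow {q : ℝ} (hq : 1 ≤ q) {g : α → ℝ≥0∞}
    (hg : AEMeasurable g μ) : (⨍⁻ x, g x ∂μ) ^ q ≤ ⨍⁻ x, g x ^ q ∂μ := by
  have hLp := eLpNorm_le_eLpNorm_of_exponent_le (μ := (μ univ)⁻¹ • μ) (p := 1)
    (q := ENNReal.ofReal q) (by simpa using hq) (hg.smul_measure _).aestronglyMeasurable
  rw [eLpNorm_one_eq_lintegral_enorm, eLpNorm_eq_lintegral_rpow_enorm_toReal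
    (by simp; linarith) ENNReal.ofReal_ne_top] at hLp
  simp only [enorm_eq_self, ENNReal.toReal_ofReal (by linarith : (0 : ℝ) ≤ q)] at hLp
  rw [laverage_eq', laverage_eq']
  calc (∫⁻ x, g x ∂(μ univ)⁻¹ • μ) ^ q
      ≤ ((∫⁻ x, g x ^ q ∂(μ univ)⁻¹ • μ) ^ (1 / q)) ^ q := by gcongr
    _ = ∫⁻ x, g x ^ q ∂(μ univ)⁻¹ • μ := by
      rw [← ENNReal.rpow_mul, one_div_mul_cancel (by linarith), ENNReal.rpow_one]

variable {E : Type*} [NormedAddCommGroup E] [NormedSpace ℝ E] [CompleteSpace E] {v : α → E}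

theorem enorm_sub_average_le_laverage (hv : Integrable v μ) (z : α) :
    ‖v z - ⨍ y, v y ∂μ‖ₑ ≤ ⨍⁻ y, ‖v z - v y‖ₑ ∂μ := by
  have : v z - ⨍ y, v y ∂μ = ⨍ y, (v z - v y) ∂μ := by
    rw [average_eq', average_eq', integral_sub (integrable_const _)
      (hv.smul_measure (by simp [NeZero.ne μ])), integral_const]
    simp
  rw [this, average_eq', laverage_eq']
  exact enorm_integral_le_lintegral_enorm _

theorem laverage_enorm_sub_average_rpow_le {q : ℝ} (hq : 1 ≤ q) (hv : Integrable v μ) :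
    ⨍⁻ z, ‖v z - ⨍ y, v y ∂μ‖ₑ ^ q ∂μ ≤ ⨍⁻ z, ⨍⁻ y, ‖v z - v y‖ₑ ^ q ∂μ ∂μ :=
  laverage_mono_ae <| .of_forall fun z => (ENNReal.rpow_le_rpow
    (enorm_sub_average_le_laverage hv z) (by linarith)).trans
      (rpow_laverage_le_laverage_rpow hq (aestronglyMeasurable_const.sub hv.1).enorm)

end Jensen

theorem hausdorffMeasure_le_of_eventually_finset_cover {X : Type*} [MetricSpace X]
    [MeasurableSpace X] [BorelSpace X] {d : ℝ} (hd : 0 ≤ d) {A : Set X} {C : ℝ}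
    (hcover : ∀ᶠ r in 𝓝[>] (0 : ℝ), ∃ t : Finset X,
      A ⊆ ⋃ x ∈ t, closedBall x r ∧ (t.card : ℝ) * r ^ d ≤ C) :
    μH[d] A ≤ ENNReal.ofReal (2 ^ d * C) := by
  obtain ⟨r₀, hr₀, hr₀cover⟩ := mem_nhdsGT_iff_exists_Ioo_subset.1 hcover
  set r : ℕ → ℝ := fun n => r₀ / (n + 2)
  have hr_mem (n : ℕ) : r n ∈ Ioo 0 r₀ :=
    ⟨div_pos hr₀ (by positivity), div_lt_self hr₀ (by linarith [n.cast_nonneg (α := ℝ)])⟩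
  have hr_tendsto : Tendsto r atTop (𝓝 0) := by
    refine ((tendsto_const_div_atTop_nhds_zero_nat r₀).comp (tendsto_add_atTop_nat 2)).congr
      fun n => ?_
    simp [r]
  choose t hAt hcard using fun n => hr₀cover (hr_mem n)
  have hdiam (n : ℕ) (x : X) : ediam (closedBall x (r n)) ≤ ENNReal.ofReal (2 * r n) :=
    ediam_le_of_forall_dist_le fun y hy z hz => (dist_triangle_right y z x).trans
      (by linarith [mem_closedBall.1 hy, mem_closedBall.1 hz])
  refine (Measure.hausdorffMeasure_le_liminf_sum d A (fun n => ENNReal.ofReal (2 * r n))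
    (by simpa using ENNReal.tendsto_ofReal (hr_tendsto.const_mul 2))
    (fun n (x : t n) => closedBall (x : X) (r n)) (.of_forall fun n x => hdiam n x)
    (.of_forall fun n => by simpa [iUnion_subtype] using hAt n)).trans
    (liminf_le_of_frequently_le' (.of_forall fun n => ?_))
  calc ∑ x : t n, ediam (closedBall (x : X) (r n)) ^ d
      ≤ ∑ _x : t n, ENNReal.ofReal (2 * r n) ^ d := by gcongr with x; exact hdiam n x
    _ = ENNReal.ofReal (2 ^ d * ((t n).card * r n ^ d)) := by
      rw [Finset.sum_const, Finset.card_univ, Fintype.card_coe, nsmul_eq_mul,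
        ENNReal.ofReal_rpow_of_nonneg (by linarith [(hr_mem n).1]) hd,
        Real.mul_rpow zero_le_two (hr_mem n).1.le, ← ENNReal.ofReal_natCast,
        ← ENNReal.ofReal_mul (by positivity)]
      ring_nf
    _ ≤ ENNReal.ofReal (2 ^ d * C) := by gcongr; exact hcard n

theorem IsOpen.isSigmaCompact {X : Type*} [MetricSpace X] [ProperSpace X] {Ω : Set X}
    (hΩ : IsOpen Ω) : IsSigmaCompact Ω := by
  obtain ⟨F, hF, -, hFΩ, -⟩ := hΩ.exists_iUnion_isClosed
  exact hFΩ ▸ isSigmaCompact_iUnion F fun n =>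
    isSigmaCompact_univ.of_isClosed_subset (hF n) (subset_univ _)

theorem IsCompact.exists_isOpen_isCompact_closure_ball_subset {X : Type*} [MetricSpace X]
    [ProperSpace X] {K Ω : Set X} (hK : IsCompact K) (hΩ : IsOpen Ω) (hKΩ : K ⊆ Ω) :
    ∃ V : Set X, IsOpen V ∧ IsCompact (closure V) ∧ closure V ⊆ Ω ∧
      ∃ δ > 0, ∀ x ∈ K, ball x δ ⊆ V := by
  obtain ⟨V, hV, hKV, hVΩ, hVc⟩ := exists_open_between_and_isCompact_closure hK hΩ hKΩ
  obtain ⟨δ, hδ, hδV⟩ := hK.exists_thickening_subset_open hV hKV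
  exact ⟨V, hV, hVc, hVΩ, δ, hδ, fun x hx => (ball_subset_thickening hx δ).trans hδV⟩

section SigmaFiniteWrt

variable {N : ℕ} {μ : Measure (Euc N)}

theorem sigmaFiniteWrt_of_subset_iUnion {ι : Type*} [Countable ι] {S : Set (Euc N)}
    {T : ι → Set (Euc N)} (hST : S ⊆ ⋃ i, T i) (hT : ∀ i, μ (T i) < ⊤) :
    SigmaFiniteWrt μ S := by
  cases isEmpty_or_nonempty ι
  · exact ⟨fun _ => ∅, by simpa using hST, fun _ => by simp⟩
  · obtain ⟨f, hf⟩ := exists_surjective_nat ι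
    exact ⟨T ∘ f, hST.trans (hf.iUnion_comp T).symm.subset, fun n => hT (f n)⟩

theorem SigmaFiniteWrt.mono {S S' : Set (Euc N)} (h : SigmaFiniteWrt μ S) (hS' : S' ⊆ S) :
    SigmaFiniteWrt μ S' :=
  let ⟨T, hST, hT⟩ := h
  ⟨T, hS'.trans hST, hT⟩

theorem SigmaFiniteWrt.iUnion {ι : Type*} [Countable ι] {S : ι → Set (Euc N)}
    (h : ∀ i, SigmaFiniteWrt μ (S i)) : SigmaFiniteWrt μ (⋃ i, S i) := by
  choose T hST hT using h
  refine sigmaFiniteWrt_of_subset_iUnion (T := fun p : ι × ℕ => T p.1 p.2)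
    (iUnion_subset fun i x hx => ?_) fun p => hT p.1 p.2
  obtain ⟨n, hn⟩ := mem_iUnion.1 (hST i hx)
  exact mem_iUnion.2 ⟨(i, n), hn⟩

theorem SigmaFiniteWrt.exists_measurableSet_superset {S : Set (Euc N)}
    (h : SigmaFiniteWrt μ S) : ∃ S', S ⊆ S' ∧ MeasurableSet S' ∧ SigmaFiniteWrt μ S' := by
  obtain ⟨T, hST, hT⟩ := h
  exact ⟨⋃ n, toMeasurable μ (T n), hST.trans (iUnion_mono fun n => subset_toMeasurable μ (T n)),
    .iUnion fun n => measurableSet_toMeasurable μ (T n), fun n => toMeasurable μ (T n), subset_rfl,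
    fun n => (measure_toMeasurable (T n)).trans_lt (hT n)⟩

end SigmaFiniteWrt

section Oscillation

variable {N d : ℕ}

def oscInt (u : Euc N → Euc d) (q : ℝ) (x : Euc N) (ε : ℝ) : ℝ≥0∞ :=
  ∫⁻ y in ball x ε, ∫⁻ z in ball x ε, ‖u y - u z‖ₑ ^ q

def meanOsc (u : Euc N → Euc d) (q : ℝ) (x : Euc N) (ε : ℝ) : ℝ≥0∞ :=
  eavg (ball x ε) fun z => (‖u z - ⨍ w in ball x ε, u w‖₊ : ℝ≥0∞) ^ q

theorem meanOsc_le_oscInt_div {u : Euc N → Euc d} {q : ℝ} (hq : 1 ≤ q) {x : Euc N} {ε : ℝ}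
    (hε : 0 < ε) (hu : IntegrableOn u (ball x ε)) :
    meanOsc u q x ε ≤ oscInt u q x ε / volume (ball x ε) ^ 2 := by
  have hB0 : volume (ball x ε) ≠ 0 := (measure_ball_pos volume x hε).ne'
  have hBtop : volume (ball x ε) ≠ ∞ := measure_ball_lt_top.ne
  have : IsFiniteMeasure (volume.restrict (ball x ε)) := isFiniteMeasure_restrict.2 hBtop
  have : NeZero (volume.restrict (ball x ε)) := ⟨by simpa using hB0⟩
  have h := laverage_enorm_sub_average_rpow_le hq hu
  simp only [laverage_eq, Measure.restrict_apply_univ] at h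
  calc meanOsc u q x ε ≤ _ := h
    _ = oscInt u q x ε / volume (ball x ε) ^ 2 := by
      simp_rw [div_eq_mul_inv, lintegral_mul_const' _ _ (ENNReal.inv_ne_top.2 hB0), pow_two,
        ENNReal.mul_inv (Or.inl hB0) (Or.inr hB0), mul_assoc]
      rfl

section Besov

variable {u : Euc N → Euc d} {q ε : ℝ} {V : Set (Euc N)}

theorem oscInt_le_mul_setLIntegral (hε : 0 < ε) {b : Euc N} (hb : ball b (2 * ε) ⊆ V) :
    oscInt u q b ε ≤ ENNReal.ofReal ((2 * ε) ^ N * (2 * ε)) *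
      ∫⁻ y in ball b ε, ∫⁻ z in V ∩ ball y (2 * ε),
        (‖u y - u z‖₊ : ℝ≥0∞) ^ q / (ENNReal.ofReal ((2 * ε) ^ N) * (‖y - z‖₊ : ℝ≥0∞)) := by
  set c := ENNReal.ofReal ((2 * ε) ^ N * (2 * ε)) with hc
  have hc0 : c ≠ 0 := by positivity
  rw [← lintegral_const_mul' _ _ ENNReal.ofReal_ne_top]
  refine setLIntegral_mono' measurableSet_ball fun y hy => ?_
  rw [← lintegral_const_mul' _ _ ENNReal.ofReal_ne_top]
  have hball : ball b ε ⊆ V ∩ ball y (2 * ε) := fun z hz =>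
    ⟨hb (ball_subset_ball (by linarith) hz), mem_ball.2 (by
      linarith [dist_triangle_right z y b, mem_ball.1 hy, mem_ball.1 hz])⟩
  refine le_trans (setLIntegral_mono' measurableSet_ball fun z hz => ?_) (lintegral_mono_set hball)
  have hyz : ENNReal.ofReal ((2 * ε) ^ N) * (‖y - z‖₊ : ℝ≥0∞) ≤ c := by
    change _ * ‖y - z‖ₑ ≤ c
    rw [hc, ENNReal.ofReal_mul (by positivity), ← edist_eq_enorm_sub, edist_dist]
    gcongr
    linarith [dist_triangle_right y z b, mem_ball.1 hy, mem_ball.1 hz]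
  calc ‖u y - u z‖ₑ ^ q = c * ((‖u y - u z‖₊ : ℝ≥0∞) ^ q / c) :=
        (ENNReal.mul_div_cancel hc0 ENNReal.ofReal_ne_top).symm
    _ ≤ _ := by gcongr

theorem sum_oscInt_le_besovInt (hε : 0 < ε) {t : Finset (Euc N)}
    (hdisj : (t : Set (Euc N)).PairwiseDisjoint (ball · ε)) (ht : ∀ b ∈ t, ball b (2 * ε) ⊆ V) :
    ∑ b ∈ t, oscInt u q b ε ≤
      ENNReal.ofReal ((2 * ε) ^ N * (2 * ε)) * besovInt N d V u q (2 * ε) := by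
  refine (Finset.sum_le_sum fun b hb => oscInt_le_mul_setLIntegral hε (ht b hb)).trans ?_
  rw [← Finset.mul_sum, ← lintegral_biUnion_finset hdisj fun _ _ => measurableSet_ball]
  exact mul_le_mul_right (lintegral_mono_set <| iUnion₂_subset fun b hb =>
    (ball_subset_ball (by linarith)).trans (ht b hb)) _

end Besov

section Covering

variable {u : Euc N → Euc d} {q : ℝ} {A V : Set (Euc N)} {c M : ℝ≥0}

theorem card_mul_le_of_pairwiseDisjoint {ε : ℝ} (hε : 0 < ε)
    (hball : ∀ x ∈ A, ball x (2 * ε) ⊆ V) (hM : besovInt N d V u q (2 * ε) ≤ M)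
    (hA : ∀ x ∈ A, (c : ℝ≥0∞) * volume (ball x ε) ^ 2 ≤ oscInt u q x ε)
    {t : Finset (Euc N)} (htA : ↑t ⊆ A) (hdisj : (t : Set (Euc N)).PairwiseDisjoint (ball · ε)) :
    (t.card : ℝ) * c * volume.real (ball (0 : Euc N) ε) ^ 2 ≤ (2 * ε) ^ N * (2 * ε) * M := by
  have key : (t.card : ℝ≥0∞) * (c * volume (ball (0 : Euc N) ε) ^ 2) ≤
      ENNReal.ofReal ((2 * ε) ^ N * (2 * ε)) * M := calc
    _ = ∑ b ∈ t, (c : ℝ≥0∞) * volume (ball b ε) ^ 2 := by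
      simp only [Measure.addHaar_ball_center volume _ ε, Finset.sum_const, nsmul_eq_mul]
    _ ≤ ∑ b ∈ t, oscInt u q b ε := Finset.sum_le_sum fun b hb => hA b (htA hb)
    _ ≤ _ := sum_oscInt_le_besovInt hε hdisj fun b hb => hball b (htA hb)
    _ ≤ _ := by gcongr
  have := ENNReal.toReal_mono (by finiteness) key
  simpa [ENNReal.toReal_mul, measureReal_def, mul_assoc,
    ENNReal.toReal_ofReal (by positivity : (0 : ℝ) ≤ (2 * ε) ^ N * (2 * ε))] using this

theorem exists_finset_cover_card_mul_pow_le (hN : 1 ≤ N) (hc : 0 < c) {ε : ℝ} (hε : 0 < ε)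
    (hball : ∀ x ∈ A, ball x (2 * ε) ⊆ V) (hM : besovInt N d V u q (2 * ε) ≤ M)
    (hA : ∀ x ∈ A, (c : ℝ≥0∞) * volume (ball x ε) ^ 2 ≤ oscInt u q x ε) :
    ∃ t : Finset (Euc N), A ⊆ ⋃ b ∈ t, closedBall b (4 * ε) ∧
      (t.card : ℝ) * (4 * ε) ^ (N - 1) ≤
        2 ^ (N + 1) * 4 ^ (N - 1) * M / (c * volume.real (ball (0 : Euc N) 1) ^ 2) := by
  have : Nonempty (Fin N) := ⟨⟨0, hN⟩⟩
  set ω := volume.real (ball (0 : Euc N) 1)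
  have hω : 0 < ω :=
    ENNReal.toReal_pos (measure_ball_pos volume 0 one_pos).ne' measure_ball_lt_top.ne
  have hvol : volume.real (ball (0 : Euc N) ε) = ε ^ N * ω := by
    simp [ω, measureReal_def, Measure.addHaar_ball _ _ hε.le,
      ENNReal.toReal_mul, ENNReal.toReal_ofReal (by positivity : 0 ≤ ε ^ N)]
  have hc' : (0 : ℝ) < c := hc
  obtain ⟨s, hsA, hdisj, hcov⟩ := Vitali.exists_disjoint_subfamily_covering_enlargement_closedBall
    A id (fun _ => ε) ε (fun _ _ => le_rfl) 4 (by norm_num)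
  have hcount (t : Finset (Euc N)) (hts : ↑t ⊆ s) :
      (t.card : ℝ) * c * (ε ^ N * ω) ^ 2 ≤ (2 * ε) ^ N * (2 * ε) * M :=
    hvol ▸ card_mul_le_of_pairwiseDisjoint hε hball hM hA (hts.trans hsA)
      ((hdisj.subset hts).mono fun _ => ball_subset_closedBall)
  have hfin : s.Finite := by
    by_contra hinf
    obtain ⟨n, hn⟩ := exists_nat_gt ((2 * ε) ^ N * (2 * ε) * M / (c * (ε ^ N * ω) ^ 2))
    obtain ⟨t, hts, rfl⟩ := Set.Infinite.exists_subset_card_eq hinf n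
    rw [div_lt_iff₀ (by positivity)] at hn
    linarith [hcount t hts]
  refine ⟨hfin.toFinset, fun a ha => ?_, ?_⟩
  · obtain ⟨b, hb, hab⟩ := hcov a ha
    exact mem_iUnion₂.2 ⟨b, by simpa using hb, hab (mem_closedBall_self hε.le)⟩
  obtain ⟨m, rfl⟩ : ∃ m, N = m + 1 := ⟨N - 1, by omega⟩
  rw [Nat.add_sub_cancel, le_div_iff₀ (by positivity)]
  refine le_of_mul_le_mul_right ?_ (by positivity : 0 < ε ^ (2 * m + 2))
  calc _ = (hfin.toFinset.card * c * (ε ^ (m + 1) * ω) ^ 2) * (4 * ε) ^ m := by ring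
    _ ≤ ((2 * ε) ^ (m + 1) * (2 * ε) * M) * (4 * ε) ^ m :=
      mul_le_mul_of_nonneg_right (hcount _ hfin.coe_toFinset.le) (by positivity)
    _ = _ := by ring

theorem hausdorffMeasure_lt_top_of_le_oscInt (hq : 0 < q) (hc : 0 < c) {r : ℝ} (hr : 0 < r)
    (hball : ∀ x ∈ A, ball x (2 * r) ⊆ V) (hM : ∀ ε ∈ Ioo 0 (2 * r), besovInt N d V u q ε ≤ M)
    (hA : ∀ x ∈ A, ∀ ε ∈ Ioo 0 r, (c : ℝ≥0∞) * volume (ball x ε) ^ 2 ≤ oscInt u q x ε) :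
    μH[(N : ℝ) - 1] A < ⊤ := by
  rcases Nat.eq_zero_or_pos N with rfl | hN
  -- `μH[-1]` is infinite on nonempty sets, but balls in `Euc 0` are points, so `A` is empty.
  · suffices A = ∅ by simp [this]
    refine eq_empty_of_forall_notMem fun x hx => ?_
    have h := hA x hx (r / 2) ⟨by positivity, by linarith⟩
    have hosc : oscInt u q x (r / 2) = 0 := by
      have h0 (y z : Euc 0) : ‖u y - u z‖ₑ ^ q = 0 := by
        rw [Subsingleton.elim y z, sub_self, enorm_zero, ENNReal.zero_rpow_of_pos hq]
      simp [oscInt, h0]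
    simp [hosc, hc.ne', (measure_ball_pos volume x (by positivity : 0 < r / 2)).ne'] at h
  refine (hausdorffMeasure_le_of_eventually_finset_cover (by simp; exact_mod_cast hN)
    (C := 2 ^ (N + 1) * 4 ^ (N - 1) * M / (c * volume.real (ball (0 : Euc N) 1) ^ 2)) ?_).trans_lt
    ENNReal.ofReal_lt_top
  filter_upwards [Ioo_mem_nhdsGT (by positivity : 0 < 4 * r)] with ρ hρ
  obtain ⟨t, hAt, hcard⟩ := exists_finset_cover_card_mul_pow_le hN hc (ε := ρ / 4)
    (by linarith [hρ.1]) (fun x hx => (ball_subset_ball (by linarith [hρ.2])).trans (hball x hx))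
    (hM _ ⟨by linarith [hρ.1], by linarith [hρ.2]⟩)
    fun x hx => hA x hx _ ⟨by linarith [hρ.1], by linarith [hρ.2]⟩
  refine ⟨t, by simpa [mul_div_cancel₀] using hAt, ?_⟩
  rw [show (N : ℝ) - 1 = ((N - 1 : ℕ) : ℝ) by push_cast [hN]; ring, Real.rpow_natCast]
  simpa [mul_div_cancel₀] using hcard

end Covering

theorem eventually_mul_volume_sq_le_oscInt {u : Euc N → Euc d} {q : ℝ} (hq : 1 ≤ q) {x : Euc N}
    {δ : ℝ} (hδ : 0 < δ) (hu : IntegrableOn u (ball x δ)) {c : ℝ≥0∞}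
    (hc : c < liminf (meanOsc u q x) (𝓝[>] 0)) :
    ∀ᶠ ε in 𝓝[>] 0, c * volume (ball x ε) ^ 2 ≤ oscInt u q x ε := by
  filter_upwards [eventually_lt_of_lt_liminf hc, Ioo_mem_nhdsGT hδ] with ε hcε hε
  have hB0 : volume (ball x ε) ≠ 0 := (measure_ball_pos volume x hε.1).ne'
  refine (ENNReal.le_div_iff_mul_le (.inl (pow_ne_zero 2 hB0))
    (.inl (ENNReal.pow_ne_top measure_ball_lt_top.ne))).1 ?_
  exact hcε.le.trans (meanOsc_le_oscInt_div hq hε.1 (hu.mono_set (ball_subset_ball hε.2.le)))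

theorem sigmaFiniteWrt_setOf_liminf_meanOsc_ne_zero {u : Euc N → Euc d} {q : ℝ} (hq : 1 ≤ q)
    {K V : Set (Euc N)} {δ : ℝ} (hδ : 0 < δ) (hKV : ∀ x ∈ K, ball x δ ⊆ V)
    (hu : MemLp u (ENNReal.ofReal q) (volume.restrict V))
    (hM : (⨆ ε ∈ Ioo (0 : ℝ) 1, besovInt N d V u q ε) < ⊤) :
    SigmaFiniteWrt μH[(N : ℝ) - 1] {x ∈ K | liminf (meanOsc u q x) (𝓝[>] 0) ≠ 0} := by
  set c : ℕ → ℝ≥0 := fun k => 1 / ((k : ℝ≥0) + 1)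
  set r : ℕ → ℝ := fun m => min δ 1 / 2 * (1 / ((m : ℝ) + 1))
  have hr_pos (m : ℕ) : 0 < r m := by positivity
  have h2r (m : ℕ) : 2 * r m ≤ min δ 1 := by
    have : 1 / ((m : ℝ) + 1) ≤ 1 :=
      div_le_one_of_le₀ (by linarith [m.cast_nonneg (α := ℝ)]) (by positivity)
    simp only [r]
    nlinarith [lt_min hδ one_pos]
  have hc_tendsto : Tendsto (fun k => (c k : ℝ≥0∞)) atTop (𝓝 0) :=
    ENNReal.tendsto_coe.2 (tendsto_one_div_add_atTop_nhds_zero_nat (𝕜 := ℝ≥0))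
  have hr_tendsto : Tendsto r atTop (𝓝 0) := by
    simpa [r] using (tendsto_one_div_add_atTop_nhds_zero_nat (𝕜 := ℝ)).const_mul (min δ 1 / 2)
  set A : ℕ × ℕ → Set (Euc N) := fun p => {x ∈ K | ∀ ε ∈ Ioo 0 (r p.2),
    (c p.1 : ℝ≥0∞) * volume (ball x ε) ^ 2 ≤ oscInt u q x ε}
  refine sigmaFiniteWrt_of_subset_iUnion (T := A) (fun x ⟨hxK, hx⟩ => ?_) fun p =>
    hausdorffMeasure_lt_top_of_le_oscInt
      (M := (⨆ ε ∈ Ioo (0 : ℝ) 1, besovInt N d V u q ε).toNNReal)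
      (by linarith) (by positivity) (hr_pos p.2)
      (fun x hx => (ball_subset_ball ((h2r p.2).trans (min_le_left _ _))).trans (hKV x hx.1))
      (fun ε hε => ?_) fun x hx => hx.2
  · have := isFiniteMeasure_restrict.2 (measure_ball_lt_top (μ := volume) (x := x) (r := δ)).ne
    have hux : IntegrableOn u (ball x δ) :=
      (hu.mono_measure (Measure.restrict_mono (hKV x hxK) le_rfl)).integrable (by simpa using hq)
    obtain ⟨k, hk⟩ := (hc_tendsto.eventually (gt_mem_nhds (pos_iff_ne_zero.2 hx))).exists
    obtain ⟨η, hη, hηosc⟩ := mem_nhdsGT_iff_exists_Ioo_subset.1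
      (eventually_mul_volume_sq_le_oscInt hq hδ hux hk)
    obtain ⟨m, hm⟩ := (hr_tendsto.eventually (gt_mem_nhds hη)).exists
    exact mem_iUnion.2 ⟨(k, m), hxK, fun ε hε => hηosc ⟨hε.1, hε.2.trans hm⟩⟩
  · rw [ENNReal.coe_toNNReal hM.ne]
    exact le_biSup (fun ε => besovInt N d V u q ε)
      ⟨hε.1, hε.2.trans_le ((h2r p.2).trans (min_le_right _ _))⟩

end Oscillation

theorem fine_property_BVq_loc_general
    {N d : ℕ} {q : ℝ} (hq : 1 ≤ q)
    {Ω : Set (Euc N)} (hΩ : IsOpen Ω) (u : Euc N → Euc d)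
    (huBVloc : ∀ Ω₀ : Set (Euc N), IsOpen Ω₀ → IsCompact (closure Ω₀) → closure Ω₀ ⊆ Ω →
      MemLp u (ENNReal.ofReal q) (volume.restrict Ω₀) ∧
        (⨆ ε ∈ Ioo (0:ℝ) 1, besovInt N d Ω₀ u q ε) < ⊤) :
    ∃ S : Set (Euc N), MeasurableSet S ∧ SigmaFiniteWrt (μH[(N : ℝ) - 1]) S ∧
      ∀ᵐ x ∂((μH[(N : ℝ) - 1]).restrict (Ω \ S)),
        liminf (fun ε => eavg (ball x ε) fun z =>
            (‖u z - ⨍ w in ball x ε, u w‖₊ : ℝ≥0∞) ^ q) (𝓝[>] (0:ℝ)) = 0 := by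
  obtain ⟨K, hK, hKΩ⟩ := hΩ.isSigmaCompact
  have hbad : SigmaFiniteWrt μH[(N : ℝ) - 1]
      {x ∈ Ω | liminf (meanOsc u q x) (𝓝[>] 0) ≠ 0} := by
    refine (SigmaFiniteWrt.iUnion
      (S := fun n => {x ∈ K n | liminf (meanOsc u q x) (𝓝[>] 0) ≠ 0}) fun n => ?_).mono
      fun x hx => ?_
    · obtain ⟨V, hV, hVc, hVΩ, δ, hδ, hKV⟩ :=
        (hK n).exists_isOpen_isCompact_closure_ball_subset hΩ (hKΩ ▸ subset_iUnion K n)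
      exact sigmaFiniteWrt_setOf_liminf_meanOsc_ne_zero hq hδ hKV (huBVloc V hV hVc hVΩ).1
        (huBVloc V hV hVc hVΩ).2
    · obtain ⟨n, hn⟩ := mem_iUnion.1 (hKΩ.symm ▸ hx.1)
      exact mem_iUnion.2 ⟨n, hn, hx.2⟩
  obtain ⟨S, hbS, hS, hSσ⟩ := hbad.exists_measurableSet_superset
  refine ⟨S, hS, hSσ, ae_restrict_of_forall_mem (hΩ.measurableSet.diff hS) fun x hx => ?_⟩
  by_contra h
  exact hx.2 (hbS ⟨hx.1, h⟩)

/-- Let `Ω ⊆ ℝ^N` be open, `q ∈ [1,∞)` and `u ∈ BV^q_loc(Ω, ℝ^d)`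
(i.e. `u ∈ L^q_loc(Ω)` and `u ∈ BV^q(Ω₀)` for every open `Ω₀` compactly contained in `Ω`).
Then there exists a Borel set `S` which is `σ`-finite with respect to `H^{N−1}` such that
`liminf_{ε→0+} ⨍_{B_ε(x)} |u(z) − u_{B_ε(x)}|^q dz = 0` for `H^{N−1}`-a.e. `x ∈ Ω ∖ S`. -/
theorem fine_property_BVq_loc
    {N d : ℕ} {q : ℝ} (hq : 1 ≤ q)
    {Ω : Set (Euc N)} (hΩ : IsOpen Ω) (u : Euc N → Euc d)
    (huLqloc : ∀ K : Set (Euc N), IsCompact K → K ⊆ Ω →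
      MemLp u (ENNReal.ofReal q) (volume.restrict K))
    (huBVloc : ∀ Ω₀ : Set (Euc N), IsOpen Ω₀ → IsCompact (closure Ω₀) → closure Ω₀ ⊆ Ω →
      MemLp u (ENNReal.ofReal q) (volume.restrict Ω₀) ∧
        (⨆ ε ∈ Ioo (0:ℝ) 1, besovInt N d Ω₀ u q ε) < ⊤) :
    ∃ S : Set (Euc N), MeasurableSet S ∧ SigmaFiniteWrt (μH[(N : ℝ) - 1]) S ∧
      ∀ᵐ x ∂((μH[(N : ℝ) - 1]).restrict (Ω \ S)),
        liminf (fun ε => eavg (ball x ε) fun z =>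
            (‖u z - ⨍ w in ball x ε, u w‖₊ : ℝ≥0∞) ^ q) (𝓝[>] (0:ℝ)) = 0 :=
  fine_property_BVq_loc_general hq hΩ u huBVloc
end
end

section
/- Let Ω ⊂ ℝ^N be an open set, let q ∈ [1,∞) and r ∈ (0,1), let u ∈ W^{r,q}_loc(Ω,ℝ^d) and let K ⊂ Ω be a compact set. Then for every ε > 0 there exists a compact set B ⊂ K such that L^N(K∖B) < ε and the restriction of u to B is Hölder continuous with exponent r, i.e. u ∈ C^{0,r}(B,ℝ^d). -/
open MeasureTheory Metric Filter Set Topology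
open scoped ENNReal NNReal

noncomputable section

/-- `u ∈ W^{r,q}(Ω, ℝ^d)`: `u ∈ L^q(Ω)` and the Gagliardo seminorm is finite. -/
def MemFracSobolev (N d : ℕ) (Ω : Set (Euc N)) (u : Euc N → Euc d) (r q : ℝ) : Prop :=
  MemLp u (ENNReal.ofReal q) (volume.restrict Ω) ∧
    (∫⁻ x in Ω, ∫⁻ y in Ω,
        (‖u x - u y‖₊ : ℝ≥0∞) ^ q / (‖x - y‖₊ : ℝ≥0∞) ^ ((N : ℝ) + r * q)) < ⊤

/-!
Fix a thickening `U` of `K` with compact closure in `Ω` and a Borel representative `v` of `u`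
on `U`. Finiteness of the Gagliardo seminorm makes the inner integral
`H x = ∫_U |v x - v z|^q / |x - z|^(N + r q) dz` finite almost everywhere, so off a subset of `K`
of small measure both `H` and `|v|` are bounded by some `n`. For two such points at distance
`ρ` less than the thickening radius, averaging `|v x - v y|^q ≲ |v x - v z|^q + |v y - v z|^q`
over `z` in the ball `B(x, ρ)`, on which `|x - z|, |y - z| ≤ 2ρ`, gives
`|v x - v y|^q ≲ n ρ^(r q)`; far-apart points are handled by the bound on `|v|`. Inner
regularity of Lebesgue measure then produces the compact set.
-/

open Module

section Selection

variable {α : Type*} [MeasurableSpace α] {μ : Measure α}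

theorem exists_nat_measure_inter_le_lt {K : Set α} (hK : μ K ≠ ∞) {f : α → ℝ≥0∞}
    (hf : Measurable f) (hfin : ∀ᵐ x ∂μ.restrict K, f x ≠ ∞) {ε : ℝ≥0∞} (hε : ε ≠ 0) :
    ∃ n : ℕ, μ (K ∩ {x | n ≤ f x}) < ε := by
  have hlim : Tendsto (fun n : ℕ ↦ μ.restrict K {x | n ≤ f x}) atTop
      (𝓝 (μ.restrict K (⋂ n : ℕ, {x | n ≤ f x}))) :=
    tendsto_measure_iInter_atTop
      (fun _ ↦ (measurableSet_le measurable_const hf).nullMeasurableSet)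
      (fun _ _ hmn ↦ ofPred_subset_ofPred.2 fun _ ↦ (Nat.cast_le.2 hmn).trans)
      ⟨0, ne_top_of_le_ne_top (by rwa [Measure.restrict_apply_univ])
        (measure_mono (subset_univ _))⟩
  have hnull : μ.restrict K (⋂ n : ℕ, {x | n ≤ f x}) = 0 := by
    refine measure_mono_null (fun x hx ↦ show ¬f x ≠ ∞ from fun hfx ↦ ?_) (ae_iff.1 hfin)
    obtain ⟨n, hn⟩ := ENNReal.exists_nat_gt hfx
    exact (mem_iInter.1 hx n).not_gt hn
  rw [hnull] at hlim
  obtain ⟨n, hn⟩ := (hlim.eventually (gt_mem_nhds (pos_iff_ne_zero.2 hε))).exists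
  exact ⟨n, inter_comm K _ ▸ (Measure.le_restrict_apply _ _).trans_lt hn⟩

theorem exists_isCompact_measure_sdiff_lt_forall_le [TopologicalSpace α] [OpensMeasurableSpace α]
    [T2Space α] [μ.InnerRegularCompactLTTop] {K : Set α} (hKm : MeasurableSet K) (hK : μ K ≠ ∞)
    {f : α → ℝ≥0∞} (hf : Measurable f) (hfin : ∀ᵐ x ∂μ.restrict K, f x ≠ ∞) {p : α → Prop}
    (hp : ∀ᵐ x ∂μ.restrict K, p x) {ε : ℝ≥0∞} (hε : ε ≠ 0) :
    ∃ B ⊆ K, IsCompact B ∧ μ (K \ B) < ε ∧ ∃ n : ℝ≥0, ∀ x ∈ B, f x ≤ n ∧ p x := by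
  obtain ⟨n, hn⟩ := exists_nat_measure_inter_le_lt hK hf hfin (ENNReal.half_pos hε).ne'
  obtain ⟨Z, hpZ, hZ, hZ0⟩ :=
    exists_measurable_superset_of_null (ae_iff.1 ((ae_restrict_iff' hKm).1 hp))
  set A := (K ∩ {x | f x < n}) \ Z
  have hA : MeasurableSet A := (hKm.inter (measurableSet_lt hf measurable_const)).diff hZ
  obtain ⟨B, hBA, hB, hAB⟩ := hA.exists_isCompact_sdiff_lt
    (ne_top_of_le_ne_top hK (measure_mono fun x hx ↦ hx.1.1)) (ENNReal.half_pos hε).ne'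
  refine ⟨B, fun x hx ↦ (hBA hx).1.1, hB, ?_, n, fun x hx ↦ ⟨?_, ?_⟩⟩
  · have hsub : K \ B ⊆ (K ∩ {x | n ≤ f x} ∪ Z) ∪ A \ B := by
      intro x ⟨hxK, hxB⟩
      by_cases hxA : x ∈ A
      · exact Or.inr ⟨hxA, hxB⟩
      · by_cases hxZ : x ∈ Z
        · exact Or.inl (Or.inr hxZ)
        · exact Or.inl (Or.inl ⟨hxK, show _ ≤ f x from not_lt.1 fun h ↦ hxA ⟨⟨hxK, h⟩, hxZ⟩⟩)
    calc μ (K \ B) ≤ (μ (K ∩ {x | n ≤ f x}) + μ Z) + μ (A \ B) :=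
          (measure_mono hsub).trans ((measure_union_le _ _).trans
            (add_le_add (measure_union_le _ _) le_rfl))
      _ < ε / 2 + ε / 2 := by rw [hZ0, add_zero]; exact ENNReal.add_lt_add hn hAB
      _ = ε := ENNReal.add_halves ε
  · exact_mod_cast (hBA hx).1.2.le
  · by_contra h
    exact (hBA hx).2 (hpZ fun hpx ↦ h (hpx (hBA hx).1.1))

end Selection

theorem exists_holderOnWith_of_local_of_bounded {X Y : Type*} [PseudoEMetricSpace X]
    [PseudoEMetricSpace Y] {f : X → Y} {S : Set X} {r : ℝ≥0} {δ C D : ℝ≥0∞} (hδ0 : δ ≠ 0)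
    (hδ : δ ≠ ∞) (hC : C ≠ ∞) (hD : D ≠ ∞)
    (hloc : ∀ x ∈ S, ∀ y ∈ S, edist x y < δ → edist (f x) (f y) ≤ C * edist x y ^ (r : ℝ))
    (hbdd : ∀ x ∈ S, ∀ y ∈ S, edist (f x) (f y) ≤ D) :
    ∃ C' : ℝ≥0, HolderOnWith C' r f S := by
  have hδr0 : δ ^ (r : ℝ) ≠ 0 := (ENNReal.rpow_pos (pos_iff_ne_zero.2 hδ0) hδ).ne'
  have hδr : δ ^ (r : ℝ) ≠ ∞ := ENNReal.rpow_ne_top_of_nonneg r.coe_nonneg hδ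
  refine ⟨(C + D / δ ^ (r : ℝ)).toNNReal, fun x hx y hy ↦ ?_⟩
  rw [ENNReal.coe_toNNReal (ENNReal.add_ne_top.2 ⟨hC, ENNReal.div_ne_top hD hδr0⟩), add_mul]
  rcases lt_or_ge (edist x y) δ with hnear | hfar
  · exact (hloc x hx y hy hnear).trans le_self_add
  · calc edist (f x) (f y) ≤ D / δ ^ (r : ℝ) * δ ^ (r : ℝ) := by
          rw [ENNReal.div_mul_cancel hδr0 hδr]; exact hbdd x hx y hy
      _ ≤ D / δ ^ (r : ℝ) * edist x y ^ (r : ℝ) := by gcongr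
      _ ≤ _ := le_add_self

section Gagliardo

variable {E F : Type*} [NormedAddCommGroup E] [NormedSpace ℝ E] [MeasurableSpace E]
  [NormedAddCommGroup F] (μ : Measure E) (U : Set E) {v : E → F} {r q : ℝ}

/-- The inner integral of the Gagliardo `W^{r,q}(U)` seminorm, at the point `x`. -/
def gagliardoIntegral (v : E → F) (r q : ℝ) (x : E) : ℝ≥0∞ :=
  ∫⁻ z in U, edist (v x) (v z) ^ q / edist x z ^ (finrank ℝ E + r * q) ∂μ

theorem measurable_gagliardoIntegral [OpensMeasurableSpace E] [SecondCountableTopology E]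
    [SFinite μ] [MeasurableSpace F] [OpensMeasurableSpace F] [SecondCountableTopology F]
    (hv : Measurable v) : Measurable (gagliardoIntegral μ U v r q) :=
  Measurable.lintegral_prod_right' (f := fun p : E × E ↦
      edist (v p.1) (v p.2) ^ q / edist p.1 p.2 ^ (finrank ℝ E + r * q))
    ((((hv.comp measurable_fst).edist (hv.comp measurable_snd)).pow_const _).div
      (measurable_edist.pow_const _))

theorem setLIntegral_edist_rpow_le_gagliardoIntegral (hr : 0 ≤ r) (hq : 0 ≤ q) {D : Set E}
    (hD : MeasurableSet D) (hDU : D ⊆ U) {w : E} {t : ℝ≥0∞} (ht0 : t ≠ 0) (ht : t ≠ ∞)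
    (hwt : ∀ z ∈ D, edist w z ≤ t) :
    ∫⁻ z in D, edist (v w) (v z) ^ q ∂μ ≤
      t ^ (finrank ℝ E + r * q) * gagliardoIntegral μ U v r q w := by
  set s : ℝ := finrank ℝ E + r * q
  have hts0 : t ^ s ≠ 0 := (ENNReal.rpow_pos (pos_iff_ne_zero.2 ht0) ht).ne'
  have hts : t ^ s ≠ ∞ := ENNReal.rpow_ne_top_of_nonneg (by positivity) ht
  calc ∫⁻ z in D, edist (v w) (v z) ^ q ∂μ
      ≤ ∫⁻ z in D, t ^ s * (edist (v w) (v z) ^ q / edist w z ^ s) ∂μ := by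
        refine setLIntegral_mono' hD fun z hz ↦ ?_
        calc edist (v w) (v z) ^ q = t ^ s * (edist (v w) (v z) ^ q / t ^ s) :=
              (ENNReal.mul_div_cancel hts0 hts).symm
          _ ≤ t ^ s * (edist (v w) (v z) ^ q / edist w z ^ s) := by
              gcongr
              exact hwt z hz
    _ = t ^ s * ∫⁻ z in D, edist (v w) (v z) ^ q / edist w z ^ s ∂μ :=
        lintegral_const_mul' _ _ hts
    _ ≤ t ^ s * gagliardoIntegral μ U v r q w := by gcongr; exact lintegral_mono_set hDU

theorem measure_mul_edist_rpow_le_of_gagliardoIntegral_le [MeasurableSpace F]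
    [OpensMeasurableSpace F] (hv : Measurable v) (hq : 1 ≤ q) (hr : 0 ≤ r) {D : Set E}
    (hD : MeasurableSet D) (hDU : D ⊆ U) {x y : E} {t : ℝ≥0∞} (ht0 : t ≠ 0) (ht : t ≠ ∞)
    (hxD : ∀ z ∈ D, edist x z ≤ t) (hyD : ∀ z ∈ D, edist y z ≤ t) {n : ℝ≥0∞}
    (hx : gagliardoIntegral μ U v r q x ≤ n) (hy : gagliardoIntegral μ U v r q y ≤ n) :
    μ D * edist (v x) (v y) ^ q ≤ 2 ^ q * (t ^ (finrank ℝ E + r * q) * n) := by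
  set s : ℝ := finrank ℝ E + r * q
  have hD_int : ∀ w, gagliardoIntegral μ U v r q w ≤ n → (∀ z ∈ D, edist w z ≤ t) →
      ∫⁻ z in D, edist (v w) (v z) ^ q ∂μ ≤ t ^ s * n := fun w hw hwD ↦
    (setLIntegral_edist_rpow_le_gagliardoIntegral μ U hr (by linarith) hD hDU ht0 ht hwD).trans
      (by gcongr)
  have h2 : (2 : ℝ≥0∞) ^ (q - 1) * 2 = 2 ^ q := by
    conv_rhs => rw [← sub_add_cancel q 1, ENNReal.rpow_add _ _ two_ne_zero ENNReal.ofNat_ne_top,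
      ENNReal.rpow_one]
  calc μ D * edist (v x) (v y) ^ q = ∫⁻ _ in D, edist (v x) (v y) ^ q ∂μ := by
        rw [setLIntegral_const, mul_comm]
    _ ≤ ∫⁻ z in D, 2 ^ (q - 1) * (edist (v x) (v z) ^ q + edist (v y) (v z) ^ q) ∂μ :=
        setLIntegral_mono' hD fun z _ ↦
          (ENNReal.rpow_le_rpow (edist_triangle_right _ _ _) (by linarith)).trans
            (ENNReal.rpow_add_le_mul_rpow_add_rpow _ _ hq)
    _ = 2 ^ (q - 1) *
          (∫⁻ z in D, edist (v x) (v z) ^ q ∂μ + ∫⁻ z in D, edist (v y) (v z) ^ q ∂μ) := by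
        rw [lintegral_const_mul' _ _
            (ENNReal.rpow_ne_top_of_nonneg (by linarith) ENNReal.ofNat_ne_top),
          lintegral_add_left (f := fun z ↦ edist (v x) (v z) ^ q)
            ((measurable_edist_right.comp hv).pow_const q)]
    _ ≤ 2 ^ (q - 1) * (t ^ s * n + t ^ s * n) := by
        gcongr
        exacts [hD_int x hx hxD, hD_int y hy hyD]
    _ = 2 ^ q * (t ^ s * n) := by rw [← two_mul, ← mul_assoc, h2]

theorem edist_rpow_le_of_gagliardoIntegral_le [FiniteDimensional ℝ E] [BorelSpace E]
    [μ.IsAddHaarMeasure] [MeasurableSpace F] [OpensMeasurableSpace F] (hv : Measurable v)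
    (hq : 1 ≤ q) (hr : 0 ≤ r) {x y : E} (hxy : x ≠ y) (hU : ball x (dist x y) ⊆ U) {n : ℝ≥0∞}
    (hx : gagliardoIntegral μ U v r q x ≤ n) (hy : gagliardoIntegral μ U v r q y ≤ n) :
    edist (v x) (v y) ^ q ≤
      2 ^ q * 2 ^ (finrank ℝ E + r * q) * n / μ (ball 0 1) * edist x y ^ (r * q) := by
  set s : ℝ := finrank ℝ E + r * q
  set e := edist x y with he_def
  set D := ball x (dist x y)
  have he0 : e ≠ 0 := (edist_pos.2 hxy).ne'
  have he : e ≠ ∞ := edist_ne_top x y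
  have hc0 : μ (ball 0 1) ≠ 0 := (measure_ball_pos μ _ one_pos).ne'
  have hc : μ (ball 0 1) ≠ ∞ := measure_ball_lt_top.ne
  have hD : μ D = e ^ (finrank ℝ E : ℝ) * μ (ball 0 1) := by
    rw [Measure.addHaar_ball_of_pos μ x (dist_pos.2 hxy), ENNReal.ofReal_pow dist_nonneg,
      ← edist_dist, ENNReal.rpow_natCast]
  have hxD : ∀ z ∈ D, edist x z ≤ e := fun z hz ↦ by
    rw [edist_dist, he_def, edist_dist]; exact ENNReal.ofReal_le_ofReal (mem_ball'.1 hz).le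
  have hxD' : ∀ z ∈ D, edist x z ≤ 2 * e := fun z hz ↦
    (hxD z hz).trans (by rw [two_mul]; exact le_self_add)
  have hyD : ∀ z ∈ D, edist y z ≤ 2 * e := fun z hz ↦
    (edist_triangle y x z).trans (by rw [edist_comm, two_mul]; exact add_le_add le_rfl (hxD z hz))
  have hsplit : (2 * e) ^ s = 2 ^ s * (e ^ (finrank ℝ E : ℝ) * e ^ (r * q)) := by
    rw [ENNReal.mul_rpow_of_nonneg _ _ (by positivity), ENNReal.rpow_add _ _ he0 he]
  rw [← ENNReal.mul_le_mul_iff_right (measure_ball_pos μ x (dist_pos.2 hxy)).ne'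
    measure_ball_lt_top.ne]
  calc μ D * edist (v x) (v y) ^ q ≤ 2 ^ q * ((2 * e) ^ s * n) :=
        measure_mul_edist_rpow_le_of_gagliardoIntegral_le μ U hv hq hr measurableSet_ball hU
          (mul_ne_zero two_ne_zero he0) (ENNReal.mul_ne_top ENNReal.ofNat_ne_top he) hxD' hyD hx hy
    _ = e ^ (finrank ℝ E : ℝ) * e ^ (r * q) *
          (2 ^ q * 2 ^ s * n / μ (ball 0 1) * μ (ball 0 1)) := by
        rw [hsplit, ENNReal.div_mul_cancel hc0 hc]; ring
    _ = μ D * (2 ^ q * 2 ^ s * n / μ (ball 0 1) * e ^ (r * q)) := by rw [hD]; ring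

theorem exists_holderOnWith_of_gagliardoIntegral_le [FiniteDimensional ℝ E] [BorelSpace E]
    [μ.IsAddHaarMeasure] [MeasurableSpace F] [OpensMeasurableSpace F] (hv : Measurable v)
    (hq : 1 ≤ q) (hr : 0 < r) {R : ℝ} (hR : 0 < R) (n : ℝ≥0) :
    ∃ C : ℝ≥0, HolderOnWith C ⟨r, hr.le⟩ v
      {x | ball x R ⊆ U ∧ gagliardoIntegral μ U v r q x ≤ n ∧ ‖v x‖ₑ ≤ n} := by
  set A : ℝ≥0∞ := 2 ^ q * 2 ^ (finrank ℝ E + r * q) * n / μ (ball 0 1)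
  have hA : A ≠ ∞ := ENNReal.div_ne_top (by finiteness) (measure_ball_pos μ 0 one_pos).ne'
  refine exists_holderOnWith_of_local_of_bounded (C := A ^ q⁻¹) (D := 2 * n)
    (ENNReal.ofReal_pos.2 hR).ne' ENNReal.ofReal_ne_top
    (ENNReal.rpow_ne_top_of_nonneg (inv_nonneg.2 (by linarith)) hA) (by finiteness) ?_ ?_
  · rintro x ⟨hxR, hx, -⟩ y ⟨-, hy, -⟩ hxy
    rcases eq_or_ne x y with rfl | hne
    · simp
    have hdist : dist x y < R := edist_lt_ofReal.1 hxy
    rw [← ENNReal.rpow_le_rpow_iff (by linarith : 0 < q),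
      ENNReal.mul_rpow_of_nonneg _ _ (by linarith), ENNReal.rpow_inv_rpow (by linarith),
      ← ENNReal.rpow_mul]
    exact edist_rpow_le_of_gagliardoIntegral_le μ U hv hq hr.le hne
      ((ball_subset_ball hdist.le).trans hxR) hx hy
  · rintro x ⟨-, -, hx⟩ y ⟨-, -, hy⟩
    rw [edist_eq_enorm_sub, two_mul]
    exact enorm_sub_le.trans (add_le_add hx hy)

end Gagliardo

theorem IsCompact.exists_pos_isCompact_closure_thickening_subset {X : Type*} [PseudoMetricSpace X]
    [ProperSpace X] {K Ω : Set X} (hK : IsCompact K) (hΩ : IsOpen Ω) (hKΩ : K ⊆ Ω) :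
    ∃ R > 0, IsCompact (closure (thickening R K)) ∧ closure (thickening R K) ⊆ Ω := by
  obtain ⟨R, hR, hRΩ⟩ := hK.exists_cthickening_subset_open hΩ hKΩ
  have hcl := closure_thickening_subset_cthickening R K
  exact ⟨R, hR, hK.cthickening.of_isClosed_subset isClosed_closure hcl, hcl.trans hRΩ⟩

theorem MemFracSobolev.exists_measurable_ae_eq {N d : ℕ} {U : Set (Euc N)} {u : Euc N → Euc d}
    {r q : ℝ} (hu : MemFracSobolev N d U u r q) :
    ∃ v, Measurable v ∧ u =ᵐ[volume.restrict U] v ∧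
      ∫⁻ x in U, gagliardoIntegral volume U v r q x ≠ ∞ := by
  obtain ⟨v, hv, huv⟩ := hu.1.1
  refine ⟨v, hv.measurable, huv, (lt_of_eq_of_lt ?_ hu.2).ne⟩
  refine lintegral_congr_ae ?_
  filter_upwards [huv] with x hx
  refine lintegral_congr_ae ?_
  filter_upwards [huv] with z hz
  simp only [finrank_euclideanSpace_fin, edist_eq_enorm_sub, hx, hz, enorm_eq_nnnorm]

theorem lusin_approx_fractional_sobolev_general
    {N d : ℕ} {q r : ℝ} (hq : 1 ≤ q) (hr0 : 0 < r)
    {Ω : Set (Euc N)} (hΩ : IsOpen Ω) (u : Euc N → Euc d)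
    (hu : ∀ Ω₀ : Set (Euc N), IsOpen Ω₀ → IsCompact (closure Ω₀) → closure Ω₀ ⊆ Ω →
      MemFracSobolev N d Ω₀ u r q)
    (K : Set (Euc N)) (hK : IsCompact K) (hKΩ : K ⊆ Ω) :
    ∀ ε : ℝ, 0 < ε → ∃ B : Set (Euc N), IsCompact B ∧ B ⊆ K ∧
      volume (K \ B) < ENNReal.ofReal ε ∧
      ∃ C : ℝ≥0, HolderOnWith C ⟨r, hr0.le⟩ u B := by
  intro ε hε
  obtain ⟨R, hR, hUc, hUΩ⟩ := hK.exists_pos_isCompact_closure_thickening_subset hΩ hKΩ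
  set U := thickening R K
  obtain ⟨v, hv, huv, hfin⟩ := (hu U isOpen_thickening hUc hUΩ).exists_measurable_ae_eq
  have hKU : K ⊆ U := self_subset_thickening hR K
  have hH := measurable_gagliardoIntegral volume U (r := r) (q := q) hv
  obtain ⟨B, hBK, hB, hKB, n, hBn⟩ := exists_isCompact_measure_sdiff_lt_forall_le
    hK.measurableSet hK.measure_lt_top.ne (hH.add hv.enorm)
    (ae_restrict_of_ae_restrict_of_subset hKU ((ae_lt_top hH hfin).mono fun x hx ↦
      (ENNReal.add_lt_top.2 ⟨hx, enorm_lt_top⟩).ne))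
    (ae_restrict_of_ae_restrict_of_subset hKU huv) (ENNReal.ofReal_pos.2 hε).ne'
  obtain ⟨C, hC⟩ := exists_holderOnWith_of_gagliardoIntegral_le volume U hv hq hr0 hR n
  have hBgood : ∀ x ∈ B, ball x R ⊆ U ∧ gagliardoIntegral volume U v r q x ≤ n ∧ ‖v x‖ₑ ≤ n :=
    fun x hx ↦ ⟨ball_subset_thickening (hBK hx) R, le_self_add.trans (hBn x hx).1,
      le_add_self.trans (hBn x hx).1⟩
  refine ⟨B, hB, hBK, hKB, C, fun x hx y hy ↦ ?_⟩
  rw [(hBn x hx).2, (hBn y hy).2]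
  exact hC.edist_le (hBgood x hx) (hBgood y hy)

/-- Let `Ω ⊆ ℝ^N` be open, `q ∈ [1,∞)`, `r ∈ (0,1)`,
`u ∈ W^{r,q}_loc(Ω, ℝ^d)` and `K ⊆ Ω` compact. Then for every `ε > 0` there exists a compact
set `B ⊆ K` with `L^N(K ∖ B) < ε` such that `u` restricted to `B` is `r`-Hölder continuous. -/
theorem lusin_approx_fractional_sobolev
    {N d : ℕ} {q r : ℝ} (hq : 1 ≤ q) (hr0 : 0 < r) (hr1 : r < 1)
    {Ω : Set (Euc N)} (hΩ : IsOpen Ω) (u : Euc N → Euc d)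
    (hu : ∀ Ω₀ : Set (Euc N), IsOpen Ω₀ → IsCompact (closure Ω₀) → closure Ω₀ ⊆ Ω →
      MemFracSobolev N d Ω₀ u r q)
    (K : Set (Euc N)) (hK : IsCompact K) (hKΩ : K ⊆ Ω) :
    ∀ ε : ℝ, 0 < ε → ∃ B : Set (Euc N), IsCompact B ∧ B ⊆ K ∧
      volume (K \ B) < ENNReal.ofReal ε ∧
      ∃ C : ℝ≥0, HolderOnWith C ⟨r, hr0.le⟩ u B :=
  lusin_approx_fractional_sobolev_general hq hr0 hΩ u hu K hK hKΩ
end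
end

section
/- Let Ω ⊂ ℝ^N be an open set, u ∈ L^1_loc(Ω,ℝ^d) and x ∈ Ω. For k = 1,2 let h_k ∈ ℝ^d∖{0} and ν_k ∈ S^{N-1}, and define w_k(y) := h_k if ν_k·y > 0 and w_k(y) := 0 if ν_k·y < 0. Assume that for k = 1,2 one has lim_{ρ→0+} inf_{c∈ℝ^d} ⨍_{B_1(0)} |u(x+ρy) − w_k(y) − c| dy = 0. Then (h_1,ν_1) = (h_2,ν_2) or (h_1,ν_1) = (−h_2,−ν_2). -/
open MeasureTheory Metric Filter Set Topology
open scoped ENNReal NNReal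

noncomputable section

/-!
Subtracting the two blow-up conditions (the rescaled `u` cancels) shows that the difference
`w₁ - w₂` of the two jump profiles has zero `L¹` oscillation on the unit ball, so it takes the same
value on any two nonempty open subsets of the ball where it is constant. It is constant on each of
the open sectors cut out by the hyperplanes `ν₁ᗮ` and `ν₂ᗮ`; testing points `a • ν₁ + b • ν₂` in
suitable sectors gives `h₁ = h₂` when `⟪ν₁, ν₂⟫ = 1`, `h₁ = -h₂` when `⟪ν₁, ν₂⟫ = -1`, and
`h₁ = 0` when `|⟪ν₁, ν₂⟫| < 1`.
-/

lemma MeasureTheory.AEStronglyMeasurable.comp_add_smul {V G : Type*} [NormedAddCommGroup V]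
    [NormedSpace ℝ V] [MeasurableSpace V] [BorelSpace V] [FiniteDimensional ℝ V] {μ : Measure V}
    [μ.IsAddHaarMeasure] [TopologicalSpace G] {u : V → G} {s t : Set V}
    (hu : AEStronglyMeasurable u (μ.restrict t)) (x : V) {ρ : ℝ} (hρ : ρ ≠ 0)
    (hst : MapsTo (fun y => x + ρ • y) s t) :
    AEStronglyMeasurable (fun y => u (x + ρ • y)) (μ.restrict s) :=
  hu.comp_quasiMeasurePreserving <|
    ((measurePreserving_add_left μ x).quasiMeasurePreserving.comp
      (Measure.quasiMeasurePreserving_smul μ hρ)).restrict hst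

namespace JumpUniqueness

variable {α E : Type*} [MeasurableSpace α] [NormedAddCommGroup E]

def meanOsc (μ : Measure α) (f : α → E) : ℝ≥0∞ :=
  ⨅ c : E, ∫⁻ y, ‖f y - c‖ₑ ∂μ

lemma meanOsc_sub_le {μ : Measure α} {f : α → E} (hf : AEStronglyMeasurable f μ) (g : α → E) :
    meanOsc μ (f - g) ≤ meanOsc μ f + meanOsc μ g := by
  refine ENNReal.le_iInf_add_iInf fun c c' => ?_
  calc meanOsc μ (f - g) ≤ ∫⁻ y, ‖(f - g) y - (c - c')‖ₑ ∂μ := iInf_le _ _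
    _ ≤ ∫⁻ y, ‖f y - c‖ₑ + ‖g y - c'‖ₑ ∂μ := lintegral_mono fun y => by
        rw [Pi.sub_apply, sub_sub_sub_comm]
        exact enorm_sub_le
    _ = ∫⁻ y, ‖f y - c‖ₑ ∂μ + ∫⁻ y, ‖g y - c'‖ₑ ∂μ :=
        lintegral_add_left' (hf.sub aestronglyMeasurable_const).enorm _

lemma meanOsc_sub_eq_zero_of_tendsto {ι : Type*} {l : Filter ι} [l.NeBot] {μ : Measure α}
    {F : ι → α → E} {a b : α → E} (hF : ∀ᶠ i in l, AEStronglyMeasurable (F i) μ)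
    (ha : AEStronglyMeasurable a μ) (hFa : Tendsto (fun i => meanOsc μ (F i - a)) l (𝓝 0))
    (hFb : Tendsto (fun i => meanOsc μ (F i - b)) l (𝓝 0)) :
    meanOsc μ (b - a) = 0 := by
  have hle : ∀ᶠ i in l, meanOsc μ (b - a) ≤ meanOsc μ (F i - a) + meanOsc μ (F i - b) :=
    hF.mono fun i hFi => by
      simpa only [sub_sub_sub_cancel_left] using meanOsc_sub_le (hFi.sub ha) (F i - b)
  exact nonpos_iff_eq_zero.1 (ge_of_tendsto (by simpa using hFa.add hFb) hle)

lemma mul_enorm_sub_le_lintegral {μ : Measure α} {f : α → E} {A : Set α} {a : E}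
    (hA : MeasurableSet A) (hfA : ∀ y ∈ A, f y = a) (c : E) :
    μ A * ‖a - c‖ₑ ≤ ∫⁻ y, ‖f y - c‖ₑ ∂μ := by
  rw [mul_comm, ← lintegral_indicator_const hA]
  refine lintegral_mono fun y => indicator_apply_le' (fun hy => ?_) fun _ => zero_le
  rw [hfA y hy]

lemma eq_of_meanOsc_eq_zero {μ : Measure α} {f : α → E} (hf : meanOsc μ f = 0)
    {A B : Set α} {a b : E} (hA : MeasurableSet A) (hB : MeasurableSet B)
    (hA0 : μ A ≠ 0) (hB0 : μ B ≠ 0) (hfA : ∀ y ∈ A, f y = a) (hfB : ∀ y ∈ B, f y = b) :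
    a = b := by
  set m := min (μ A) (μ B)
  have hbound : ∀ c, m * ‖a - b‖ₑ ≤ 2 * ∫⁻ y, ‖f y - c‖ₑ ∂μ := fun c =>
    calc m * ‖a - b‖ₑ ≤ m * ‖a - c‖ₑ + m * ‖b - c‖ₑ := by
          rw [← mul_add, ← sub_sub_sub_cancel_right a b c]
          exact mul_le_mul_right enorm_sub_le _
      _ ≤ μ A * ‖a - c‖ₑ + μ B * ‖b - c‖ₑ := by
          gcongr
          exacts [min_le_left _ _, min_le_right _ _]
      _ ≤ 2 * ∫⁻ y, ‖f y - c‖ₑ ∂μ := by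
          rw [two_mul]
          exact add_le_add (mul_enorm_sub_le_lintegral hA hfA c)
            (mul_enorm_sub_le_lintegral hB hfB c)
  have hzero : m * ‖a - b‖ₑ = 0 := by
    refine le_antisymm ?_ zero_le
    rw [← mul_zero 2, ← hf, meanOsc, ENNReal.mul_iInf_of_ne two_ne_zero ENNReal.ofNat_ne_top]
    exact le_iInf hbound
  simpa [m, hA0, hB0, sub_eq_zero] using hzero

lemma eq_of_meanOsc_restrict_eq_zero [TopologicalSpace α] [OpensMeasurableSpace α]
    {μ : Measure α} [μ.IsOpenPosMeasure] {f : α → E} {U : Set α} (hU : IsOpen U)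
    (hf : meanOsc (μ.restrict U) f = 0) {p q : α} (hp : p ∈ U) (hq : q ∈ U)
    (hfp : ∀ᶠ y in 𝓝 p, f y = f p) (hfq : ∀ᶠ y in 𝓝 q, f y = f q) :
    f p = f q := by
  obtain ⟨A, hfA, hA, hpA⟩ := eventually_nhds_iff.1 hfp
  obtain ⟨B, hfB, hB, hqB⟩ := eventually_nhds_iff.1 hfq
  refine eq_of_meanOsc_eq_zero hf hA.measurableSet hB.measurableSet ?_ ?_ hfA hfB
  · rw [Measure.restrict_apply hA.measurableSet]
    exact ((hA.inter hU).measure_pos μ ⟨p, hpA, hp⟩).ne'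
  · rw [Measure.restrict_apply hB.measurableSet]
    exact ((hB.inter hU).measure_pos μ ⟨q, hqB, hq⟩).ne'

section HalfSpaceJump

variable {F : Type*} [NormedAddCommGroup F] [InnerProductSpace ℝ F]

def halfSpaceJump (ν : F) (h : E) (y : F) : E :=
  if 0 < inner ℝ ν y then h else 0

lemma stronglyMeasurable_halfSpaceJump [MeasurableSpace F] [OpensMeasurableSpace F]
    (ν : F) (h : E) : StronglyMeasurable (halfSpaceJump ν h) :=
  stronglyMeasurable_const.ite
    (isOpen_lt continuous_const (continuous_const.inner continuous_id)).measurableSet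
    stronglyMeasurable_const

lemma eventually_halfSpaceJump_eq {ν p : F} (hp : inner ℝ ν p ≠ 0) (h : E) :
    ∀ᶠ y in 𝓝 p, halfSpaceJump ν h y = halfSpaceJump ν h p := by
  have hcont : Continuous fun y : F => inner ℝ ν y := continuous_const.inner continuous_id
  rcases hp.lt_or_gt with hneg | hpos
  · filter_upwards [hcont.continuousAt.eventually (gt_mem_nhds hneg)] with y hy
    simp only [halfSpaceJump, if_neg hy.not_gt, if_neg hneg.not_gt]
  · filter_upwards [hcont.continuousAt.eventually (lt_mem_nhds hpos)] with y hy
    simp only [halfSpaceJump, if_pos hy, if_pos hpos]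

lemma eventually_halfSpaceJump_sub_eq {ν₁ ν₂ p : F} (hp₁ : inner ℝ ν₁ p ≠ 0)
    (hp₂ : inner ℝ ν₂ p ≠ 0) (h₁ h₂ : E) :
    ∀ᶠ y in 𝓝 p, (halfSpaceJump ν₁ h₁ - halfSpaceJump ν₂ h₂) y =
      (halfSpaceJump ν₁ h₁ - halfSpaceJump ν₂ h₂) p := by
  filter_upwards [eventually_halfSpaceJump_eq hp₁ h₁, eventually_halfSpaceJump_eq hp₂ h₂]
    with y hy₁ hy₂
  rw [Pi.sub_apply, Pi.sub_apply, hy₁, hy₂]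

lemma smul_add_smul_mem_ball {ν₁ ν₂ : F} (hν₁ : ‖ν₁‖ = 1) (hν₂ : ‖ν₂‖ = 1) {a b : ℝ}
    (hab : |a| + |b| < 1) : a • ν₁ + b • ν₂ ∈ ball (0 : F) 1 := by
  rw [mem_ball_zero_iff]
  calc ‖a • ν₁ + b • ν₂‖ ≤ ‖a • ν₁‖ + ‖b • ν₂‖ := norm_add_le _ _
    _ = |a| + |b| := by simp [norm_smul, hν₁, hν₂]
    _ < 1 := hab

lemma inner_left_smul_add_smul {ν₁ : F} (hν₁ : ‖ν₁‖ = 1) (ν₂ : F) (a b : ℝ) :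
    inner ℝ ν₁ (a • ν₁ + b • ν₂) = a + b * inner ℝ ν₁ ν₂ := by
  simp [inner_add_right, real_inner_smul_right, hν₁]

lemma inner_right_smul_add_smul {ν₂ : F} (hν₂ : ‖ν₂‖ = 1) (ν₁ : F) (a b : ℝ) :
    inner ℝ ν₂ (a • ν₁ + b • ν₂) = a * inner ℝ ν₁ ν₂ + b := by
  simp [inner_add_right, real_inner_smul_right, hν₂, real_inner_comm ν₁ ν₂]

lemma ite_sub_ite_eq_of_meanOsc_halfSpaceJump_sub_eq_zero [MeasurableSpace F]
    [OpensMeasurableSpace F] {μ : Measure F} [μ.IsOpenPosMeasure] {ν₁ ν₂ : F} {h₁ h₂ : E}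
    (hν₁ : ‖ν₁‖ = 1) (hν₂ : ‖ν₂‖ = 1)
    (hosc : meanOsc (μ.restrict (ball 0 1)) (halfSpaceJump ν₁ h₁ - halfSpaceJump ν₂ h₂) = 0)
    (a b a' b' : ℝ) (hab : |a| + |b| < 1) (ha'b' : |a'| + |b'| < 1)
    (hp₁ : a + b * inner ℝ ν₁ ν₂ ≠ 0) (hp₂ : a * inner ℝ ν₁ ν₂ + b ≠ 0)
    (hq₁ : a' + b' * inner ℝ ν₁ ν₂ ≠ 0) (hq₂ : a' * inner ℝ ν₁ ν₂ + b' ≠ 0) :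
    (if 0 < a + b * inner ℝ ν₁ ν₂ then h₁ else 0) -
        (if 0 < a * inner ℝ ν₁ ν₂ + b then h₂ else 0) =
      (if 0 < a' + b' * inner ℝ ν₁ ν₂ then h₁ else 0) -
        (if 0 < a' * inner ℝ ν₁ ν₂ + b' then h₂ else 0) := by
  have hval : ∀ a b : ℝ, (halfSpaceJump ν₁ h₁ - halfSpaceJump ν₂ h₂) (a • ν₁ + b • ν₂) =
      (if 0 < a + b * inner ℝ ν₁ ν₂ then h₁ else 0) -
        (if 0 < a * inner ℝ ν₁ ν₂ + b then h₂ else 0) := fun a b => by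
    simp only [Pi.sub_apply, halfSpaceJump, inner_left_smul_add_smul hν₁,
      inner_right_smul_add_smul hν₂]
  rw [← hval, ← hval]
  refine eq_of_meanOsc_restrict_eq_zero isOpen_ball hosc (smul_add_smul_mem_ball hν₁ hν₂ hab)
    (smul_add_smul_mem_ball hν₁ hν₂ ha'b') (eventually_halfSpaceJump_sub_eq ?_ ?_ h₁ h₂)
    (eventually_halfSpaceJump_sub_eq ?_ ?_ h₁ h₂) <;>
  simpa only [inner_left_smul_add_smul hν₁, inner_right_smul_add_smul hν₂]

theorem eq_or_eq_neg_of_meanOsc_halfSpaceJump_sub_eq_zero [MeasurableSpace F]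
    [OpensMeasurableSpace F] {μ : Measure F} [μ.IsOpenPosMeasure] {ν₁ ν₂ : F} {h₁ h₂ : E}
    (hh₁ : h₁ ≠ 0) (hν₁ : ‖ν₁‖ = 1) (hν₂ : ‖ν₂‖ = 1)
    (hosc : meanOsc (μ.restrict (ball 0 1)) (halfSpaceJump ν₁ h₁ - halfSpaceJump ν₂ h₂) = 0) :
    (h₁ = h₂ ∧ ν₁ = ν₂) ∨ (h₁ = -h₂ ∧ ν₁ = -ν₂) := by
  have key := ite_sub_ite_eq_of_meanOsc_halfSpaceJump_sub_eq_zero hν₁ hν₂ hosc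
  set t := inner ℝ ν₁ ν₂
  obtain ⟨ht_ge, ht_le⟩ : -1 ≤ t ∧ t ≤ 1 :=
    abs_le.1 (by simpa [hν₁, hν₂] using abs_real_inner_le_norm ν₁ ν₂)
  rcases eq_or_ne t 1 with ht_one | ht_one
  · have hvals := key (1/4) (1/4) (-1/4) (-1/4) (by norm_num) (by norm_num) (by norm_num [ht_one])
      (by norm_num [ht_one]) (by norm_num [ht_one]) (by norm_num [ht_one])
    norm_num [ht_one, sub_eq_zero] at hvals
    exact .inl ⟨hvals, (inner_eq_one_iff_of_norm_eq_one hν₁ hν₂).1 ht_one⟩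
  rcases eq_or_ne t (-1) with ht_neg_one | ht_neg_one
  · have hvals := key (1/4) (-1/4) (-1/4) (1/4) (by norm_num) (by norm_num)
      (by norm_num [ht_neg_one]) (by norm_num [ht_neg_one]) (by norm_num [ht_neg_one])
      (by norm_num [ht_neg_one])
    norm_num [ht_neg_one] at hvals
    exact .inr ⟨hvals, (inner_eq_neg_one_iff_of_norm_eq_one hν₁ hν₂).1 ht_neg_one⟩
  have ht_gt : -1 < t := lt_of_le_of_ne ht_ge ht_neg_one.symm
  have ht_lt : t < 1 := lt_of_le_of_ne ht_le ht_one
  have hvals := key (1/4) (-1/4) (-1/4) (-1/4) (by norm_num) (by norm_num) (by linarith)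
    (by linarith) (by linarith) (by linarith)
  rw [if_pos (by linarith), if_neg (by linarith), if_neg (by linarith),
    if_neg (by linarith)] at hvals
  exact absurd (by simpa using hvals) hh₁

end HalfSpaceJump

lemma meanOsc_restrict_eq_iInf_eavg_mul {N : ℕ} {s : Set (Euc N)} (hs₀ : volume s ≠ 0)
    (hs : volume s ≠ ⊤) (f : Euc N → E) :
    meanOsc (volume.restrict s) f =
      (⨅ c : E, eavg s fun y => (‖f y - c‖₊ : ℝ≥0∞)) * volume s := by
  rw [ENNReal.iInf_mul_of_ne hs₀ hs]
  simp only [eavg, ENNReal.div_mul_cancel hs₀ hs]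
  rfl

lemma tendsto_meanOsc_of_tendsto_iInf_eavg {N : ℕ} {s : Set (Euc N)} (hs₀ : volume s ≠ 0)
    (hs : volume s ≠ ⊤) {ι : Type*} {l : Filter ι} {f : ι → Euc N → E}
    (hf : Tendsto (fun i => ⨅ c : E, eavg s fun y => (‖f i y - c‖₊ : ℝ≥0∞)) l (𝓝 0)) :
    Tendsto (fun i => meanOsc (volume.restrict s) (f i)) l (𝓝 0) := by
  simpa only [meanOsc_restrict_eq_iInf_eavg_mul hs₀ hs, zero_mul] using
    ENNReal.Tendsto.mul_const hf (Or.inr hs)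

end JumpUniqueness

open JumpUniqueness

theorem gen_jump_data_unique_general
    {N d : ℕ} {Ω : Set (Euc N)} (hΩ : IsOpen Ω)
    (u : Euc N → Euc d) (hu : LocallyIntegrableOn u Ω volume)
    (x : Euc N) (hx : x ∈ Ω)
    (h₁ h₂ : Euc d) (hh₁ : h₁ ≠ 0)
    (ν₁ ν₂ : Euc N) (hν₁ : ‖ν₁‖ = 1) (hν₂ : ‖ν₂‖ = 1)
    (hblow₁ : Tendsto (fun ρ : ℝ => ⨅ c : Euc d,
        eavg (ball (0 : Euc N) 1) fun y =>
          (‖u (x + ρ • y) - (if 0 < (inner ℝ ν₁ y : ℝ) then h₁ else 0) - c‖₊ : ℝ≥0∞))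
      (𝓝[>] (0:ℝ)) (𝓝 0))
    (hblow₂ : Tendsto (fun ρ : ℝ => ⨅ c : Euc d,
        eavg (ball (0 : Euc N) 1) fun y =>
          (‖u (x + ρ • y) - (if 0 < (inner ℝ ν₂ y : ℝ) then h₂ else 0) - c‖₊ : ℝ≥0∞))
      (𝓝[>] (0:ℝ)) (𝓝 0)) :
    (h₁ = h₂ ∧ ν₁ = ν₂) ∨ (h₁ = -h₂ ∧ ν₁ = -ν₂) := by
  obtain ⟨r, hr, hrΩ⟩ := Metric.isOpen_iff.1 hΩ x hx
  have hball₀ : volume (ball (0 : Euc N) 1) ≠ 0 := (measure_ball_pos _ _ one_pos).ne'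
  have hball : volume (ball (0 : Euc N) 1) ≠ ⊤ := measure_ball_lt_top.ne
  have hmeas : ∀ᶠ ρ in 𝓝[>] (0 : ℝ),
      AEStronglyMeasurable (fun y => u (x + ρ • y)) (volume.restrict (ball 0 1)) := by
    filter_upwards [Ioo_mem_nhdsGT hr] with ρ ⟨hρ, hρr⟩
    refine hu.aestronglyMeasurable.comp_add_smul x hρ.ne' fun y hy => hrΩ ?_
    rw [mem_ball, dist_eq_norm, add_sub_cancel_left, norm_smul, Real.norm_of_nonneg hρ.le]
    nlinarith [mem_ball_zero_iff.1 hy, norm_nonneg y]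
  refine eq_or_eq_neg_of_meanOsc_halfSpaceJump_sub_eq_zero hh₁ hν₁ hν₂ <|
    meanOsc_sub_eq_zero_of_tendsto hmeas
      (stronglyMeasurable_halfSpaceJump ν₂ h₂).aestronglyMeasurable ?_ ?_
  · exact tendsto_meanOsc_of_tendsto_iInf_eavg hball₀ hball
      (f := fun ρ => (fun y => u (x + ρ • y)) - halfSpaceJump ν₂ h₂) hblow₂
  · exact tendsto_meanOsc_of_tendsto_iInf_eavg hball₀ hball
      (f := fun ρ => (fun y => u (x + ρ • y)) - halfSpaceJump ν₁ h₁) hblow₁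

/-- Let `Ω ⊆ ℝ^N` be open, `u ∈ L^1_loc(Ω, ℝ^d)` and `x ∈ Ω`. For `k = 1,2`
let `h_k ∈ ℝ^d ∖ {0}` and `ν_k ∈ S^{N−1}`, and let `w_k(y) = h_k` if `ν_k·y > 0`, `w_k(y) = 0`
if `ν_k·y < 0`. If `lim_{ρ→0+} inf_{c ∈ ℝ^d} ⨍_{B_1(0)} |u(x + ρy) − w_k(y) − c| dy = 0` for
`k = 1,2`, then `(h₁, ν₁) = (h₂, ν₂)` or `(h₁, ν₁) = (−h₂, −ν₂)`. -/
theorem gen_jump_data_unique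
    {N d : ℕ} {Ω : Set (Euc N)} (hΩ : IsOpen Ω)
    (u : Euc N → Euc d) (hu : LocallyIntegrableOn u Ω volume)
    (x : Euc N) (hx : x ∈ Ω)
    (h₁ h₂ : Euc d) (hh₁ : h₁ ≠ 0) (hh₂ : h₂ ≠ 0)
    (ν₁ ν₂ : Euc N) (hν₁ : ‖ν₁‖ = 1) (hν₂ : ‖ν₂‖ = 1)
    (hblow₁ : Tendsto (fun ρ : ℝ => ⨅ c : Euc d,
        eavg (ball (0 : Euc N) 1) fun y =>
          (‖u (x + ρ • y) - (if 0 < (inner ℝ ν₁ y : ℝ) then h₁ else 0) - c‖₊ : ℝ≥0∞))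
      (𝓝[>] (0:ℝ)) (𝓝 0))
    (hblow₂ : Tendsto (fun ρ : ℝ => ⨅ c : Euc d,
        eavg (ball (0 : Euc N) 1) fun y =>
          (‖u (x + ρ • y) - (if 0 < (inner ℝ ν₂ y : ℝ) then h₂ else 0) - c‖₊ : ℝ≥0∞))
      (𝓝[>] (0:ℝ)) (𝓝 0)) :
    (h₁ = h₂ ∧ ν₁ = ν₂) ∨ (h₁ = -h₂ ∧ ν₁ = -ν₂) :=
  gen_jump_data_unique_general hΩ u hu x hx h₁ h₂ hh₁ ν₁ ν₂ hν₁ hν₂ hblow₁ hblow₂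
end
end

section
/- Let Ω ⊂ ℝ^N be an open set, let u ∈ L^1_loc(Ω,ℝ^d), let x ∈ J'_u and let q > 0. Then liminf_{t→0+} ⨍_{B_1(0)×B_1(0)} |u(x+ty) − u(x+tz)|^q d(L^N×L^N)(y,z) ≥ (1/2)|u^{j'}(x)|^q. Moreover, for every α, β > 0 the family of functions y ↦ |u(x+tαy) − u(x−tβy)| converges in L^1_loc(ℝ^N) to the constant function |u^{j'}(x)| as t → 0+. -/
open MeasureTheory Metric Filter Set Topology
open scoped ENNReal NNReal

noncomputable section

/-- The half ball `B_ρ^+(x,ν) = {y ∈ B_ρ(x) : (y−x)·ν > 0}`. -/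
def halfBallP {N : ℕ} (x ν : Euc N) (ρ : ℝ) : Set (Euc N) :=
  {y | y ∈ ball x ρ ∧ 0 < (inner ℝ ν (y - x) : ℝ)}

/-- The half ball `B_ρ^-(x,ν) = {y ∈ B_ρ(x) : (y−x)·ν < 0}`. -/
def halfBallM {N : ℕ} (x ν : Euc N) (ρ : ℝ) : Set (Euc N) :=
  {y | y ∈ ball x ρ ∧ (inner ℝ ν (y - x) : ℝ) < 0}

/-- `x` is a generalized approximate jump point of `u` with data `(h, ν)`. -/
def IsGenJump {N d : ℕ} (u : Euc N → Euc d) (x : Euc N) (h : Euc d) (ν : Euc N) : Prop :=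
  ‖ν‖ = 1 ∧ h ≠ 0 ∧
    Tendsto (fun ρ => ⨅ c : Euc d,
        ((eavg (halfBallP x ν ρ) fun y => (‖u y - h - c‖₊ : ℝ≥0∞)) +
          eavg (halfBallM x ν ρ) fun y => (‖u y - c‖₊ : ℝ≥0∞)))
      (𝓝[>] (0:ℝ)) (𝓝 0)

/-- The generalized jump set `J'_u` of `u` in `Ω`. -/
def genJumpSet {N d : ℕ} (Ω : Set (Euc N)) (u : Euc N → Euc d) : Set (Euc N) :=
  {x ∈ Ω | ∃ h ν, IsGenJump u x h ν}

/-!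
Rescaling by `y ↦ x + ρ • y` turns the jump condition into: for small `ρ` there is `c` such that
the blow-up `u (x + ρ • ·)` is `L¹`-close to `h + c` on the upper unit half ball `B⁺` and to `c`
on the lower one `B⁻`. By Chebyshev, outside a set of measure `δ |B^±|` it is even `δ`-close, so
`|u (x + t y) - u (x + t z)| ≥ |h| - 2δ` on a subset of `B⁺ × B⁻ ∪ B⁻ × B⁺` of measure at least
`2 (1 - δ)² |B⁺|² = (1 - δ)² |B × B| / 2`; letting `δ → 0` gives the liminf bound.
For the second claim, if `⟪ν, y⟫ > 0` then `α y` and `-β y` lie in opposite half balls and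
`| |a - b| - |h| | ≤ |a - h - c| + |b - c|`; the case `⟪ν, y⟫ < 0` is symmetric and the
hyperplane is null. Both arguments need a measurable `u`, so `u` is first replaced by a
measurable function equal to it a.e. on `Ω`, which changes nothing at small scales.
-/

theorem abs_norm_sub_sub_norm_le {F : Type*} [SeminormedAddCommGroup F] (a b h c : F) :
    |‖a - b‖ - ‖h‖| ≤ ‖a - h - c‖ + ‖b - c‖ :=
  calc |‖a - b‖ - ‖h‖| ≤ ‖a - b - h‖ := abs_norm_sub_norm_le _ _
    _ = ‖(a - h - c) - (b - c)‖ := by congr 1; abel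
    _ ≤ ‖a - h - c‖ + ‖b - c‖ := norm_sub_le _ _

theorem tendsto_nhds_zero_of_forall_le_mul {ι : Type*} {l : Filter ι} {f : ι → ℝ≥0∞}
    {C : ℝ≥0∞} (hC : C ≠ ∞) (h : ∀ ε > 0, ∀ᶠ i in l, f i ≤ ε * C) : Tendsto f l (𝓝 0) := by
  rw [ENNReal.tendsto_nhds_zero]
  intro ε hε
  rcases eq_or_ne C 0 with rfl | hC0
  · filter_upwards [h 1 one_pos] with i hi
    exact hi.trans (by simp)
  · filter_upwards [h (ε / C) (ENNReal.div_pos hε.ne' hC)] with i hi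
    exact hi.trans (ENNReal.div_mul_cancel hC0 hC).le

section LowerBounds

variable {α : Type*} [MeasurableSpace α] (μ : Measure α)

theorem measure_sub_le_measure_inter_lt {f : α → ℝ≥0∞} (hf : Measurable f) (S : Set α)
    {δ η : ℝ≥0∞} (hδ : δ ≠ 0) (hδ' : δ ≠ ∞) (hS : ∫⁻ y in S, f y ∂μ ≤ δ * η) :
    μ S - η ≤ μ (S ∩ {y | f y < δ}) := by
  have hlarge : μ (S ∩ {y | δ ≤ f y}) ≤ η := by
    have hcheb := (mul_meas_ge_le_lintegral₀ hf.aemeasurable (μ := μ.restrict S) δ).trans hS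
    rw [Measure.restrict_apply (measurableSet_le measurable_const hf), inter_comm] at hcheb
    exact (ENNReal.mul_le_mul_iff_right hδ hδ').1 hcheb
  have hsplit : S ⊆ S ∩ {y | f y < δ} ∪ S ∩ {y | δ ≤ f y} := fun y hy =>
    (lt_or_ge (f y) δ).imp (fun h => ⟨hy, h⟩) fun h => ⟨hy, h⟩
  rw [tsub_le_iff_right]
  exact (measure_mono hsplit).trans ((measure_union_le _ _).trans (add_le_add_right hlarge _))

theorem measure_prod_union_swap [SFinite μ] {s t : Set α} (hs : MeasurableSet s)
    (ht : MeasurableSet t) (hst : Disjoint s t) :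
    μ.prod μ (s ×ˢ t ∪ t ×ˢ s) = 2 * (μ s * μ t) := by
  rw [measure_union (disjoint_prod.2 (Or.inl hst)) (ht.prod hs), Measure.prod_prod,
    Measure.prod_prod, mul_comm (μ t), two_mul]

theorem le_lintegral_prod_of_near [SFinite μ] {F : Type*} [SeminormedAddCommGroup F]
    {v : α → F} {S G₁ G₂ : Set α} (hG₁ : MeasurableSet G₁) (hG₂ : MeasurableSet G₂)
    (hdisj : Disjoint G₁ G₂) (hG₁S : G₁ ⊆ S) (hG₂S : G₂ ⊆ S) {h c : F} {δ q : ℝ} (hq : 0 ≤ q)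
    (h₁ : ∀ y ∈ G₁, ‖v y - h - c‖ < δ) (h₂ : ∀ z ∈ G₂, ‖v z - c‖ < δ) :
    ENNReal.ofReal (‖h‖ - 2 * δ) ^ q * (2 * (μ G₁ * μ G₂)) ≤
      ∫⁻ p in S ×ˢ S, (‖v p.1 - v p.2‖₊ : ℝ≥0∞) ^ q ∂μ.prod μ := by
  have hnear : ∀ y ∈ G₁, ∀ z ∈ G₂,
      ENNReal.ofReal (‖h‖ - 2 * δ) ^ q ≤ (‖v y - v z‖₊ : ℝ≥0∞) ^ q := by
    intro y hy z hz
    refine ENNReal.rpow_le_rpow ?_ hq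
    rw [← enorm_eq_nnnorm, ← ofReal_norm]
    refine ENNReal.ofReal_le_ofReal ?_
    linarith [(abs_le.1 (abs_norm_sub_sub_norm_le (v y) (v z) h c)).1, h₁ y hy, h₂ z hz]
  calc _ = ∫⁻ _ in G₁ ×ˢ G₂ ∪ G₂ ×ˢ G₁, ENNReal.ofReal (‖h‖ - 2 * δ) ^ q ∂μ.prod μ := by
        rw [setLIntegral_const, measure_prod_union_swap μ hG₁ hG₂ hdisj]
    _ ≤ ∫⁻ p in G₁ ×ˢ G₂ ∪ G₂ ×ˢ G₁, (‖v p.1 - v p.2‖₊ : ℝ≥0∞) ^ q ∂μ.prod μ := by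
        refine setLIntegral_mono' ((hG₁.prod hG₂).union (hG₂.prod hG₁)) ?_
        rintro ⟨y, z⟩ (⟨hy, hz⟩ | ⟨hy, hz⟩)
        · exact hnear y hy z hz
        · rw [← nndist_eq_nnnorm, nndist_comm, nndist_eq_nnnorm]
          exact hnear z hz y hy
    _ ≤ _ := lintegral_mono_set (union_subset (prod_mono hG₁S hG₂S) (prod_mono hG₂S hG₁S))

end LowerBounds

section AddHaar

variable {E F : Type*} [NormedAddCommGroup E] [NormedSpace ℝ E] [MeasurableSpace E] [BorelSpace E]
  [FiniteDimensional ℝ E] (μ : Measure E) [μ.IsAddHaarMeasure]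

theorem setLIntegral_comp_add_smul (x : E) {s : ℝ} (hs : s ≠ 0) (f : E → ℝ≥0∞) (S : Set E) :
    ∫⁻ y in (fun y => x + s • y) ⁻¹' S, f (x + s • y) ∂μ =
      ENNReal.ofReal |(s ^ Module.finrank ℝ E)⁻¹| * ∫⁻ z in S, f z ∂μ := by
  let g : E ≃ᵐ E := (MeasurableEquiv.smul₀ s hs).trans (MeasurableEquiv.addLeft x)
  have hg : Measure.map g μ = ENNReal.ofReal |(s ^ Module.finrank ℝ E)⁻¹| • μ := by
    change Measure.map ((fun z => x + z) ∘ (s • ·)) μ = _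
    rw [← Measure.map_map (measurable_const_add x) (measurable_const_smul s),
      Measure.map_addHaar_smul μ hs, Measure.map_smul, map_add_left_eq_self]
  rw [← smul_eq_mul, ← lintegral_smul_measure, ← Measure.restrict_smul, ← hg,
    g.measurableEmbedding.restrict_map, g.measurableEmbedding.lintegral_map]
  rfl

theorem measure_preimage_add_smul (x : E) {s : ℝ} (hs : s ≠ 0) (S : Set E) :
    μ ((fun y => x + s • y) ⁻¹' S) = ENNReal.ofReal |(s ^ Module.finrank ℝ E)⁻¹| * μ S := by
  simpa using setLIntegral_comp_add_smul μ x hs (fun _ => 1) S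

theorem eventually_ae_eq_comp_add_smul {u w : E → F} {Ω : Set E} {x : E} (hΩ : Ω ∈ 𝓝 x)
    (huw : u =ᵐ[μ.restrict Ω] w) {R : ℝ} (hR : 0 < R) :
    ∀ᶠ s in 𝓝 (0 : ℝ), s ≠ 0 →
      (fun y => u (x + s • y)) =ᵐ[μ.restrict (ball 0 R)] fun y => w (x + s • y) := by
  obtain ⟨r, hr, hrΩ⟩ := Metric.mem_nhds_iff.1 hΩ
  have hball : ∀ᵐ z ∂μ, z ∈ ball x r → u z = w z :=
    (ae_restrict_iff' measurableSet_ball).1 (ae_restrict_of_ae_restrict_of_subset hrΩ huw)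
  filter_upwards [ball_mem_nhds (0 : ℝ) (div_pos hr hR)] with s hs hs0
  have hqmp : Measure.QuasiMeasurePreserving (fun y => x + s • y) μ μ :=
    (measurePreserving_add_left μ x).quasiMeasurePreserving.comp
      (Measure.quasiMeasurePreserving_smul μ hs0)
  refine (ae_restrict_iff' measurableSet_ball).2 ((hqmp.ae hball).mono fun y hy hyR => hy ?_)
  rw [mem_ball_zero_iff, Real.norm_eq_abs, lt_div_iff₀ hR] at hs
  rw [mem_ball_zero_iff] at hyR
  rw [mem_ball, dist_self_add_left, norm_smul, Real.norm_eq_abs]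
  nlinarith [abs_nonneg s, norm_nonneg y]

theorem lintegral_abs_norm_sub_le [NormedAddCommGroup F] [MeasurableSpace F]
    [BorelSpace F] {v : E → F} (hv : Measurable v) {S P M : Set E} {s₁ s₂ : ℝ} (hs₁ : s₁ ≠ 0)
    (hs₂ : s₂ ≠ 0) (hS : ∀ y ∈ S, s₁ • y ∈ P ∧ s₂ • y ∈ M) (h c : F) :
    ∫⁻ y in S, ENNReal.ofReal |‖v (s₁ • y) - v (s₂ • y)‖ - ‖h‖| ∂μ ≤
      ENNReal.ofReal |(s₁ ^ Module.finrank ℝ E)⁻¹| * ∫⁻ z in P, ‖v z - h - c‖₊ ∂μ +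
        ENNReal.ofReal |(s₂ ^ Module.finrank ℝ E)⁻¹| * ∫⁻ z in M, ‖v z - c‖₊ ∂μ := by
  have hscale : ∀ {s : ℝ}, s ≠ 0 → ∀ (f : E → ℝ≥0∞) (T : Set E), (∀ y ∈ S, s • y ∈ T) →
      ∫⁻ y in S, f (s • y) ∂μ ≤ ENNReal.ofReal |(s ^ Module.finrank ℝ E)⁻¹| * ∫⁻ z in T, f z ∂μ :=
    fun hs f T hT => (lintegral_mono_set (show S ⊆ (_ • ·) ⁻¹' T from hT)).trans_eq
      (by simpa using setLIntegral_comp_add_smul μ 0 hs f T)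
  calc _ ≤ ∫⁻ y in S, ((‖v (s₁ • y) - h - c‖₊ : ℝ≥0∞) + ‖v (s₂ • y) - c‖₊) ∂μ := by
        refine lintegral_mono fun y => ?_
        simp only [← enorm_eq_nnnorm, ← ofReal_norm]
        rw [← ENNReal.ofReal_add (norm_nonneg _) (norm_nonneg _)]
        exact ENNReal.ofReal_le_ofReal (abs_norm_sub_sub_norm_le _ _ h c)
    _ = _ := lintegral_add_left
        (((hv.comp (measurable_const_smul s₁)).sub_const h).sub_const c).nnnorm.coe_nnreal_ennreal _
    _ ≤ _ := add_le_add (hscale hs₁ (fun z => ‖v z - h - c‖₊) P fun y hy => (hS y hy).1)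
        (hscale hs₂ (fun z => ‖v z - c‖₊) M fun y hy => (hS y hy).2)

end AddHaar

theorem volume_inner_eq_zero {E : Type*} [NormedAddCommGroup E] [InnerProductSpace ℝ E]
    [MeasurableSpace E] [BorelSpace E] [FiniteDimensional ℝ E] (μ : Measure E)
    [μ.IsAddHaarMeasure] {ν : E} (hν : ν ≠ 0) : μ {y | inner ℝ ν y = 0} = 0 := by
  have hperp : {y : E | inner ℝ ν y = 0} = ((ℝ ∙ ν)ᗮ : Submodule ℝ E) := by
    ext y
    simp [Submodule.mem_orthogonal_singleton_iff_inner_right]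
  rw [hperp]
  exact Measure.addHaar_submodule μ _ (by simpa [Submodule.orthogonal_eq_top_iff] using hν)

section HalfBalls

variable {N : ℕ}

@[simp]
theorem mem_halfBallP_zero {ν y : Euc N} {r : ℝ} :
    y ∈ halfBallP 0 ν r ↔ ‖y‖ < r ∧ 0 < inner ℝ ν y := by
  simp [halfBallP]

@[simp]
theorem mem_halfBallM_zero {ν y : Euc N} {r : ℝ} :
    y ∈ halfBallM 0 ν r ↔ ‖y‖ < r ∧ inner ℝ ν y < 0 := by
  simp [halfBallM]

theorem smul_mem_halfBallP_zero {ν y : Euc N} {s r : ℝ} (hr : |s| * ‖y‖ < r)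
    (hs : 0 < s * inner ℝ ν y) : s • y ∈ halfBallP 0 ν r :=
  mem_halfBallP_zero.2 ⟨by rwa [norm_smul, Real.norm_eq_abs], by rwa [real_inner_smul_right]⟩

theorem smul_mem_halfBallM_zero {ν y : Euc N} {s r : ℝ} (hr : |s| * ‖y‖ < r)
    (hs : s * inner ℝ ν y < 0) : s • y ∈ halfBallM 0 ν r :=
  mem_halfBallM_zero.2 ⟨by rwa [norm_smul, Real.norm_eq_abs], by rwa [real_inner_smul_right]⟩

theorem measurableSet_halfBallP (x ν : Euc N) (r : ℝ) : MeasurableSet (halfBallP x ν r) :=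
  show MeasurableSet (ball x r ∩ {y | 0 < inner ℝ ν (y - x)}) from
    (isOpen_ball.inter (isOpen_lt continuous_const (by fun_prop))).measurableSet

theorem measurableSet_halfBallM (x ν : Euc N) (r : ℝ) : MeasurableSet (halfBallM x ν r) :=
  show MeasurableSet (ball x r ∩ {y | inner ℝ ν (y - x) < 0}) from
    (isOpen_ball.inter (isOpen_lt (by fun_prop) continuous_const)).measurableSet

theorem preimage_halfBallP (x ν : Euc N) {ρ : ℝ} (hρ : 0 < ρ) (r : ℝ) :
    (fun y => x + ρ • y) ⁻¹' halfBallP x ν (r * ρ) = halfBallP 0 ν r := by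
  ext y
  simp [halfBallP, norm_smul, abs_of_pos hρ, real_inner_smul_right, mul_comm r ρ, hρ]

theorem preimage_halfBallM (x ν : Euc N) {ρ : ℝ} (hρ : 0 < ρ) (r : ℝ) :
    (fun y => x + ρ • y) ⁻¹' halfBallM x ν (r * ρ) = halfBallM 0 ν r := by
  ext y
  simp [halfBallM, norm_smul, abs_of_pos hρ, real_inner_smul_right, mul_comm r ρ, hρ,
    mul_neg_iff, hρ.not_gt]

theorem halfBallM_zero_eq_neg (ν : Euc N) (r : ℝ) : halfBallM 0 ν r = -halfBallP 0 ν r := by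
  ext y
  simp [inner_neg_right]

theorem volume_halfBallM_zero (ν : Euc N) (r : ℝ) :
    volume (halfBallM 0 ν r) = volume (halfBallP 0 ν r) := by
  rw [halfBallM_zero_eq_neg, Measure.measure_neg]

theorem volume_ball_zero_eq_add {ν : Euc N} (hν : ν ≠ 0) (r : ℝ) :
    volume (ball (0 : Euc N) r) = volume (halfBallP 0 ν r) + volume (halfBallM 0 ν r) := by
  have hdisj : Disjoint (halfBallP 0 ν r) (halfBallM 0 ν r) :=
    disjoint_left.2 fun y hP hM => (mem_halfBallP_zero.1 hP).2.not_gt (mem_halfBallM_zero.1 hM).2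
  have hcover : ball 0 r ⊆ halfBallP 0 ν r ∪ halfBallM 0 ν r ∪ {y | inner ℝ ν y = 0} := by
    intro y hy
    rw [mem_ball_zero_iff] at hy
    rcases lt_trichotomy (inner ℝ ν y) 0 with h | h | h
    · exact Or.inl (Or.inr (mem_halfBallM_zero.2 ⟨hy, h⟩))
    · exact Or.inr h
    · exact Or.inl (Or.inl (mem_halfBallP_zero.2 ⟨hy, h⟩))
  rw [← measure_union hdisj (measurableSet_halfBallM 0 ν r)]
  refine le_antisymm ((measure_mono hcover).trans ((measure_union_le _ _).trans_eq ?_))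
    (measure_mono (union_subset (fun y hy => hy.1) fun y hy => hy.1))
  rw [volume_inner_eq_zero volume hν, add_zero]

end HalfBalls

theorem eavg_comp_add_smul {N : ℕ} (x : Euc N) {s : ℝ} (hs : s ≠ 0) (f : Euc N → ℝ≥0∞)
    (S : Set (Euc N)) :
    eavg ((fun y => x + s • y) ⁻¹' S) (fun y => f (x + s • y)) = eavg S f := by
  have hc : ENNReal.ofReal |(s ^ Module.finrank ℝ (Euc N))⁻¹| ≠ 0 :=
    (ENNReal.ofReal_pos.2 (abs_pos.2 (inv_ne_zero (pow_ne_zero _ hs)))).ne'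
  rw [eavg, eavg, setLIntegral_comp_add_smul volume x hs, measure_preimage_add_smul volume x hs,
    ENNReal.mul_div_mul_left _ _ hc ENNReal.ofReal_ne_top]

section HalfBallEstimates

variable {N : ℕ} {F : Type*} [NormedAddCommGroup F] [MeasurableSpace F] [BorelSpace F]

theorem lintegral_abs_norm_sub_le_of_halfBalls {v : Euc N → F} (hv : Measurable v) {ν : Euc N}
    (hν : ν ≠ 0) {K : Set (Euc N)} {a b R r : ℝ} (ha : 0 < a) (hb : 0 < b)
    (hKR : K ⊆ ball 0 R) (haR : a * R ≤ r) (hbR : b * R ≤ r) (h c : F) :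
    ∫⁻ y in K, ENNReal.ofReal |‖v (a • y) - v ((-b) • y)‖ - ‖h‖| ≤
      (ENNReal.ofReal |(a ^ Module.finrank ℝ (Euc N))⁻¹| +
          ENNReal.ofReal |((-b) ^ Module.finrank ℝ (Euc N))⁻¹|) *
        ((∫⁻ z in halfBallP 0 ν r, ‖v z - h - c‖₊) + ∫⁻ z in halfBallM 0 ν r, ‖v z - c‖₊) := by
  have ha' : ∀ y ∈ K, |a| * ‖y‖ < r := fun y hy => by
    rw [abs_of_pos ha]
    exact (mul_lt_mul_of_pos_left (mem_ball_zero_iff.1 (hKR hy)) ha).trans_le haR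
  have hb' : ∀ y ∈ K, |-b| * ‖y‖ < r := fun y hy => by
    rw [abs_neg, abs_of_pos hb]
    exact (mul_lt_mul_of_pos_left (mem_ball_zero_iff.1 (hKR hy)) hb).trans_le hbR
  have hpos := lintegral_abs_norm_sub_le volume hv ha.ne' (neg_ne_zero.2 hb.ne')
    (S := K ∩ {y | 0 < inner ℝ ν y}) (fun y ⟨hyK, hy⟩ =>
      ⟨smul_mem_halfBallP_zero (ha' y hyK) (mul_pos ha hy),
        smul_mem_halfBallM_zero (hb' y hyK) (mul_neg_of_neg_of_pos (neg_neg_of_pos hb) hy)⟩) h c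
  have hneg := lintegral_abs_norm_sub_le volume hv (neg_ne_zero.2 hb.ne') ha.ne'
    (S := K ∩ {y | inner ℝ ν y < 0}) (fun y ⟨hyK, hy⟩ =>
      ⟨smul_mem_halfBallP_zero (hb' y hyK) (mul_pos_of_neg_of_neg (neg_neg_of_pos hb) hy),
        smul_mem_halfBallM_zero (ha' y hyK) (mul_neg_of_pos_of_neg ha hy)⟩) h c
  simp only [norm_sub_rev (v ((-b) • _))] at hneg
  have hcover : K ⊆ K ∩ {y | 0 < inner ℝ ν y} ∪ K ∩ {y | inner ℝ ν y < 0} ∪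
      {y | inner ℝ ν y = 0} := fun y hy => by
    rcases lt_trichotomy (inner ℝ ν y) 0 with h | h | h
    · exact Or.inl (Or.inr ⟨hy, h⟩)
    · exact Or.inr h
    · exact Or.inl (Or.inl ⟨hy, h⟩)
  calc _ ≤ _ := lintegral_mono_set hcover
    _ ≤ _ := (lintegral_union_le _ _ _).trans (add_le_add_left (lintegral_union_le _ _ _) _)
    _ = _ := by rw [setLIntegral_measure_zero _ _ (volume_inner_eq_zero volume hν), add_zero]
    _ ≤ _ := add_le_add hpos hneg
    _ = _ := by ring

theorem le_lintegral_ball_prod_div {v : Euc N → F} (hv : Measurable v) {ν : Euc N} (hν : ν ≠ 0)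
    {h c : F} {δ q : ℝ} (hδ : 0 < δ) (hq : 0 ≤ q)
    (hP : ∫⁻ y in halfBallP 0 ν 1, ‖v y - h - c‖₊ ≤
      ENNReal.ofReal δ * (ENNReal.ofReal δ * volume (halfBallP 0 ν 1)))
    (hM : ∫⁻ y in halfBallM 0 ν 1, ‖v y - c‖₊ ≤
      ENNReal.ofReal δ * (ENNReal.ofReal δ * volume (halfBallM 0 ν 1))) :
    ENNReal.ofReal (‖h‖ - 2 * δ) ^ q * (ENNReal.ofReal (1 - δ) ^ 2 * 2⁻¹) ≤
      (∫⁻ p in ball (0 : Euc N) 1 ×ˢ ball (0 : Euc N) 1, (‖v p.1 - v p.2‖₊ : ℝ≥0∞) ^ q) /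
        volume (ball (0 : Euc N) 1 ×ˢ ball (0 : Euc N) 1) := by
  set P := halfBallP (0 : Euc N) ν 1
  set M := halfBallM (0 : Euc N) ν 1
  set A := volume P
  have hA : A ≠ ∞ := ((measure_mono fun y hy => hy.1).trans_lt measure_ball_lt_top).ne
  have hMA : volume M = A := volume_halfBallM_zero ν 1
  have hB : volume (ball (0 : Euc N) 1) = A + A := by rw [volume_ball_zero_eq_add hν, hMA]
  have hB0 : volume (ball (0 : Euc N) 1) ≠ 0 := (measure_ball_pos volume 0 one_pos).ne'
  have hδ0 : ENNReal.ofReal δ ≠ 0 := (ENNReal.ofReal_pos.2 hδ).ne'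
  have hsub : ENNReal.ofReal (1 - δ) * A = A - ENNReal.ofReal δ * A := by
    rw [ENNReal.ofReal_sub _ hδ.le, ENNReal.ofReal_one, ENNReal.sub_mul fun _ _ => hA, one_mul]
  set G₁ := P ∩ {y | (‖v y - h - c‖₊ : ℝ≥0∞) < ENNReal.ofReal δ}
  set G₂ := M ∩ {y | (‖v y - c‖₊ : ℝ≥0∞) < ENNReal.ofReal δ}
  have hG₁ : ENNReal.ofReal (1 - δ) * A ≤ volume G₁ := hsub ▸
    measure_sub_le_measure_inter_lt volume ((hv.sub_const h).sub_const c).nnnorm.coe_nnreal_ennreal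
      P hδ0 ENNReal.ofReal_ne_top hP
  have hG₂ : ENNReal.ofReal (1 - δ) * A ≤ volume G₂ := hsub ▸ hMA ▸
    measure_sub_le_measure_inter_lt volume (hv.sub_const c).nnnorm.coe_nnreal_ennreal
      M hδ0 ENNReal.ofReal_ne_top hM
  have hlow := le_lintegral_prod_of_near volume (v := v) (h := h) (c := c) (δ := δ)
    (S := ball 0 1) (G₁ := G₁) (G₂ := G₂)
    ((measurableSet_halfBallP 0 ν 1).inter (measurableSet_lt
      ((hv.sub_const h).sub_const c).nnnorm.coe_nnreal_ennreal measurable_const))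
    ((measurableSet_halfBallM 0 ν 1).inter (measurableSet_lt
      (hv.sub_const c).nnnorm.coe_nnreal_ennreal measurable_const))
    (disjoint_left.2 fun y h₁ h₂ =>
      (mem_halfBallP_zero.1 h₁.1).2.not_gt (mem_halfBallM_zero.1 h₂.1).2)
    (fun y hy => hy.1.1) (fun y hy => hy.1.1) hq
    (fun y hy => by simpa using hy.2) (fun y hy => by simpa using hy.2)
  rw [Measure.volume_eq_prod, Measure.prod_prod,
    ENNReal.le_div_iff_mul_le (Or.inl (mul_ne_zero hB0 hB0))
      (Or.inl (ENNReal.mul_ne_top measure_ball_lt_top.ne measure_ball_lt_top.ne)), hB]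
  calc _ = ENNReal.ofReal (‖h‖ - 2 * δ) ^ q *
        (2 * (ENNReal.ofReal (1 - δ) * A * (ENNReal.ofReal (1 - δ) * A))) * (2 * 2⁻¹) := by ring
    _ ≤ ENNReal.ofReal (‖h‖ - 2 * δ) ^ q * (2 * (volume G₁ * volume G₂)) := by
        rw [ENNReal.mul_inv_cancel two_ne_zero ENNReal.ofNat_ne_top, mul_one]
        gcongr
    _ ≤ _ := hlow

end HalfBallEstimates

section AeCongr

variable {N : ℕ} {F : Type*} {u w : Euc N → F} {x : Euc N} {Ω : Set (Euc N)}

theorem eventuallyEq_lintegral_ball_prod (hΩ : Ω ∈ 𝓝 x) (huw : u =ᵐ[volume.restrict Ω] w)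
    (G : F → F → ℝ≥0∞) :
    (fun t : ℝ => ∫⁻ p in ball (0 : Euc N) 1 ×ˢ ball (0 : Euc N) 1,
        G (u (x + t • p.1)) (u (x + t • p.2))) =ᶠ[𝓝[>] 0]
      fun t => ∫⁻ p in ball (0 : Euc N) 1 ×ˢ ball (0 : Euc N) 1,
        G (w (x + t • p.1)) (w (x + t • p.2)) := by
  filter_upwards [nhdsWithin_le_nhds (eventually_ae_eq_comp_add_smul volume hΩ huw one_pos),
    self_mem_nhdsWithin] with t ht (ht0 : 0 < t)
  refine lintegral_congr_ae ?_
  rw [Measure.volume_eq_prod, ← Measure.prod_restrict]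
  filter_upwards [Measure.quasiMeasurePreserving_fst.ae (ht ht0.ne'),
    Measure.quasiMeasurePreserving_snd.ae (ht ht0.ne')] with p h₁ h₂
  rw [h₁, h₂]

theorem eventuallyEq_lintegral_rescaled (hΩ : Ω ∈ 𝓝 x) (huw : u =ᵐ[volume.restrict Ω] w)
    {K : Set (Euc N)} (hK : Bornology.IsBounded K) {α β : ℝ} (hα : α ≠ 0) (hβ : β ≠ 0)
    (G : F → F → ℝ≥0∞) :
    (fun t : ℝ => ∫⁻ y in K, G (u (x + (t * α) • y)) (u (x - (t * β) • y))) =ᶠ[𝓝[>] 0]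
      fun t => ∫⁻ y in K, G (w (x + (t * α) • y)) (w (x - (t * β) • y)) := by
  obtain ⟨R, hR, hKR⟩ := hK.subset_ball_lt 0 0
  have hlim : ∀ c : ℝ, Tendsto (fun t : ℝ => t * c) (𝓝[>] 0) (𝓝 0) := fun c => by
    simpa using ((tendsto_id (x := 𝓝 (0 : ℝ))).mul_const c).mono_left nhdsWithin_le_nhds
  have hae := eventually_ae_eq_comp_add_smul volume hΩ huw hR
  filter_upwards [(hlim α).eventually hae, (hlim (-β)).eventually hae, self_mem_nhdsWithin]
    with t hα' hβ' (ht : 0 < t)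
  refine lintegral_congr_ae (ae_restrict_of_ae_restrict_of_subset hKR ?_)
  filter_upwards [hα' (mul_ne_zero ht.ne' hα), hβ' (mul_ne_zero ht.ne' (neg_ne_zero.2 hβ))]
    with y h₁ h₂
  rw [sub_eq_add_neg, ← neg_smul, ← mul_neg, h₁, h₂]

end AeCongr

section GenJump

variable {N d : ℕ} {u w : Euc N → Euc d} {x : Euc N} {h : Euc d} {ν : Euc N}

theorem IsGenJump.ne_zero (hj : IsGenJump u x h ν) : ν ≠ 0 := by
  rintro rfl
  simpa using hj.1

theorem IsGenJump.congr_ae {Ω : Set (Euc N)} (hj : IsGenJump u x h ν) (hΩ : Ω ∈ 𝓝 x)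
    (huw : u =ᵐ[volume.restrict Ω] w) : IsGenJump w x h ν := by
  obtain ⟨r, hr, hrΩ⟩ := Metric.mem_nhds_iff.1 hΩ
  refine ⟨hj.1, hj.2.1, hj.2.2.congr' ?_⟩
  filter_upwards [Ioo_mem_nhdsGT hr] with ρ hρ
  have hae : ∀ S ⊆ ball x ρ, u =ᵐ[volume.restrict S] w := fun S hS =>
    ae_restrict_of_ae_restrict_of_subset (hS.trans ((ball_subset_ball hρ.2.le).trans hrΩ)) huw
  refine iInf_congr fun c => congr_arg₂ (· + ·) ?_ ?_ <;> unfold eavg <;> congr 1 <;>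
    refine lintegral_congr_ae ?_
  · filter_upwards [hae _ fun y hy => hy.1] with y hy
    rw [hy]
  · filter_upwards [hae _ fun y hy => hy.1] with y hy
    rw [hy]

theorem IsGenJump.eventually_exists_lintegral_le (hj : IsGenJump u x h ν) {r : ℝ} (hr : 0 < r)
    {ε : ℝ≥0∞} (hε : 0 < ε) :
    ∀ᶠ ρ in 𝓝[>] (0 : ℝ), ∃ c : Euc d,
      ∫⁻ y in halfBallP 0 ν r, ‖u (x + ρ • y) - h - c‖₊ ≤ ε * volume (halfBallP 0 ν r) ∧
      ∫⁻ y in halfBallM 0 ν r, ‖u (x + ρ • y) - c‖₊ ≤ ε * volume (halfBallM 0 ν r) := by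
  have hle : ∀ a b : ℝ≥0∞, b ≠ ∞ → a / b < ε → a ≤ ε * b := fun a b hb hab => by
    rcases eq_or_ne a 0 with rfl | ha
    · exact zero_le
    · exact ((ENNReal.div_lt_iff (Or.inr ha) (Or.inl hb)).1 hab).le
  have hfin : ∀ S ⊆ ball (0 : Euc N) r, volume S ≠ ∞ := fun S hS =>
    ((measure_mono hS).trans_lt measure_ball_lt_top).ne
  filter_upwards [eventually_nhdsGT_zero_mul_left hr (hj.2.2.eventually_lt_const hε),
    self_mem_nhdsWithin] with ρ hρε (hρ : 0 < ρ)
  obtain ⟨c, hc⟩ := iInf_lt_iff.1 hρε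
  rw [← eavg_comp_add_smul x hρ.ne', ← eavg_comp_add_smul x hρ.ne' _ (halfBallM x ν _),
    preimage_halfBallP x ν hρ, preimage_halfBallM x ν hρ] at hc
  exact ⟨c, hle _ _ (hfin _ fun y hy => hy.1) (le_self_add.trans_lt hc),
    hle _ _ (hfin _ fun y hy => hy.1) (le_add_self.trans_lt hc)⟩

theorem IsGenJump.le_liminf_average (hu : Measurable u) (hj : IsGenJump u x h ν) {q : ℝ}
    (hq : 0 ≤ q) :
    2⁻¹ * (‖h‖₊ : ℝ≥0∞) ^ q ≤
      liminf (fun t : ℝ =>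
        (∫⁻ p in ball (0 : Euc N) 1 ×ˢ ball (0 : Euc N) 1,
            (‖u (x + t • p.1) - u (x + t • p.2)‖₊ : ℝ≥0∞) ^ q) /
          volume (ball (0 : Euc N) 1 ×ˢ ball (0 : Euc N) 1)) (𝓝[>] 0) := by
  have hnorm : Tendsto (fun δ : ℝ => ENNReal.ofReal (‖h‖ - 2 * δ) ^ q) (𝓝 0)
      (𝓝 ((‖h‖₊ : ℝ≥0∞) ^ q)) := by
    have hcont : Continuous fun δ : ℝ => ENNReal.ofReal (‖h‖ - 2 * δ) ^ q :=
      ENNReal.continuous_rpow_const.comp (ENNReal.continuous_ofReal.comp (by fun_prop))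
    simpa [← enorm_eq_nnnorm, ← ofReal_norm] using hcont.tendsto 0
  have hvol : Tendsto (fun δ : ℝ => ENNReal.ofReal (1 - δ) ^ 2 * 2⁻¹) (𝓝 0) (𝓝 2⁻¹) := by
    have hcont : Continuous fun δ : ℝ => ENNReal.ofReal (1 - δ) ^ 2 * 2⁻¹ :=
      (ENNReal.continuous_mul_const (by simp)).comp
        ((ENNReal.continuous_pow 2).comp (ENNReal.continuous_ofReal.comp (by fun_prop)))
    simpa using hcont.tendsto 0
  have hbound := tendsto_nhdsWithin_of_tendsto_nhds (s := Ioi 0) (ENNReal.Tendsto.mul hnorm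
    (Or.inr (by simp)) hvol (Or.inr (ENNReal.rpow_ne_top_of_nonneg hq ENNReal.coe_ne_top)))
  rw [mul_comm]
  refine le_of_tendsto hbound ?_
  filter_upwards [self_mem_nhdsWithin] with δ (hδ : 0 < δ)
  have hε : 0 < ENNReal.ofReal δ * ENNReal.ofReal δ := by
    have := ENNReal.ofReal_pos.2 hδ
    positivity
  refine le_liminf_of_le (by isBoundedDefault) ?_
  filter_upwards [hj.eventually_exists_lintegral_le one_pos hε] with t ⟨c, hP, hM⟩
  exact le_lintegral_ball_prod_div (hu.comp (measurable_const_add x |>.comp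
    (measurable_const_smul t))) hj.ne_zero hδ hq (by rwa [← mul_assoc]) (by rwa [← mul_assoc])

theorem IsGenJump.tendsto_lintegral_abs_norm_sub (hu : Measurable u) (hj : IsGenJump u x h ν)
    {α β : ℝ} (hα : 0 < α) (hβ : 0 < β) {K : Set (Euc N)} (hK : Bornology.IsBounded K) :
    Tendsto (fun t : ℝ => ∫⁻ y in K,
        ENNReal.ofReal |‖u (x + (t * α) • y) - u (x - (t * β) • y)‖ - ‖h‖|) (𝓝[>] 0) (𝓝 0) := by
  obtain ⟨R, hR, hKR⟩ := hK.subset_ball_lt 0 0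
  set r := (α + β) * R
  set C := ENNReal.ofReal |(α ^ Module.finrank ℝ (Euc N))⁻¹| +
    ENNReal.ofReal |((-β) ^ Module.finrank ℝ (Euc N))⁻¹|
  have hfin : ∀ S ⊆ ball (0 : Euc N) r, volume S ≠ ∞ := fun S hS =>
    ((measure_mono hS).trans_lt measure_ball_lt_top).ne
  refine tendsto_nhds_zero_of_forall_le_mul (C := C * (volume (halfBallP 0 ν r) +
      volume (halfBallM 0 ν r))) (ENNReal.mul_ne_top (by finiteness) (ENNReal.add_ne_top.2
        ⟨hfin _ fun y hy => hy.1, hfin _ fun y hy => hy.1⟩)) fun ε hε => ?_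
  filter_upwards [hj.eventually_exists_lintegral_le (r := r) (by positivity) hε] with t ⟨c, hP, hM⟩
  have hrescale : ∀ y : Euc N, x + (t * α) • y = x + t • (α • y) ∧
      x - (t * β) • y = x + t • ((-β) • y) := fun y =>
    ⟨by rw [smul_smul], by rw [smul_smul, mul_neg, neg_smul, sub_eq_add_neg]⟩
  simp only [hrescale]
  calc _ ≤ C * ((∫⁻ z in halfBallP 0 ν r, ‖u (x + t • z) - h - c‖₊) +
        ∫⁻ z in halfBallM 0 ν r, ‖u (x + t • z) - c‖₊) :=
      lintegral_abs_norm_sub_le_of_halfBalls (by fun_prop) hj.ne_zero hα hβ hKR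
        (by nlinarith) (by nlinarith) h c
    _ ≤ C * (ε * volume (halfBallP 0 ν r) + ε * volume (halfBallM 0 ν r)) := by gcongr
    _ = ε * (C * (volume (halfBallP 0 ν r) + volume (halfBallM 0 ν r))) := by ring

end GenJump

/-- Let `Ω ⊆ ℝ^N` be open, `u ∈ L^1_loc(Ω, ℝ^d)`, `x ∈ J'_u` with
generalized jump data `(h, ν)`, and `q > 0`. Then
`liminf_{t→0+} ⨍_{B_1(0)×B_1(0)} |u(x+ty) − u(x+tz)|^q d(L^N×L^N)(y,z) ≥ (1/2)|u^{j'}(x)|^q`,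
and for every `α, β > 0` the functions `y ↦ |u(x+tαy) − u(x−tβy)|` converge in
`L^1_loc(ℝ^N)` to the constant `|u^{j'}(x)|` as `t → 0+`. -/
theorem gen_jump_rescaled_family
    {N d : ℕ} {Ω : Set (Euc N)} (hΩ : IsOpen Ω)
    (u : Euc N → Euc d) (hu : LocallyIntegrableOn u Ω volume)
    (x : Euc N) (hx : x ∈ Ω)
    (h : Euc d) (ν : Euc N) (hjump : IsGenJump u x h ν)
    {q : ℝ} (hq : 0 < q) :
    ((2⁻¹ : ℝ≥0∞) * (‖h‖₊ : ℝ≥0∞) ^ q ≤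
      liminf (fun t : ℝ =>
        (∫⁻ p in (ball (0 : Euc N) 1) ×ˢ (ball (0 : Euc N) 1),
            (‖u (x + t • p.1) - u (x + t • p.2)‖₊ : ℝ≥0∞) ^ q) /
          volume ((ball (0 : Euc N) 1) ×ˢ (ball (0 : Euc N) 1))) (𝓝[>] (0:ℝ))) ∧
    ∀ α β : ℝ, 0 < α → 0 < β → ∀ K : Set (Euc N), IsCompact K →
      Tendsto (fun t : ℝ => ∫⁻ y in K,
          ENNReal.ofReal |‖u (x + (t * α) • y) - u (x - (t * β) • y)‖ - ‖h‖|)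
        (𝓝[>] (0:ℝ)) (𝓝 0) := by
  obtain ⟨w, hw, huw⟩ : ∃ w, Measurable w ∧ u =ᵐ[volume.restrict Ω] w :=
    ⟨_, hu.aestronglyMeasurable.stronglyMeasurable_mk.measurable,
      hu.aestronglyMeasurable.ae_eq_mk⟩
  have hΩx : Ω ∈ 𝓝 x := hΩ.mem_nhds hx
  have hjw : IsGenJump w x h ν := hjump.congr_ae hΩx huw
  refine ⟨?_, fun α β hα hβ K hK => ?_⟩
  · refine (hjw.le_liminf_average hw hq.le).trans_eq (liminf_congr ?_)
    filter_upwards [eventuallyEq_lintegral_ball_prod hΩx huw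
      fun a b => (‖a - b‖₊ : ℝ≥0∞) ^ q] with t ht
    rw [ht]
  · exact (hjw.tendsto_lintegral_abs_norm_sub hw hα hβ hK.isBounded).congr'
      (eventuallyEq_lintegral_rescaled hΩx huw hK.isBounded hα.ne' hβ.ne'
        fun a b => ENNReal.ofReal |‖a - b‖ - ‖h‖|).symm
end
end

section
/- Let Ω ⊂ ℝ^N be an open set, q ∈ [1,∞) and u ∈ L^q(Ω,ℝ^d). Then the Besov q-constant B̂_{u,q}(Ω) is finite if and only if the upper infinitesimal Besov q-constant B̄_{u,q}(Ω) is finite. -/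
/-!
For `δ ≤ ε` split `B_ε(x)` into `B_δ(x)` and the annulus `δ ≤ |x - y| < ε`. On `B_δ(x)` the
kernel at scale `ε` is dominated by the one at scale `δ`; on the annulus it is at most
`δ^{-(N+1)} |u(x) - u(y)|^q`, whose double integral is at most `2^q |B_ε| ‖u‖_q^q` by Tonelli.
Hence the double integral at any `ε ∈ [δ, 1)` exceeds the one at `δ` by a bounded amount, so a
finite `limsup` at `0⁺` gives a bound on all of `(0, 1)`.
-/

open MeasureTheory Metric Filter Set Topology
open scoped ENNReal NNReal

noncomputable section

section BallIntegrals

variable {E : Type*} [PseudoMetricSpace E] [MeasurableSpace E] [OpensMeasurableSpace E]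
  [SecondCountableTopology E] {μ : Measure E} [SFinite μ] {s : Set E} {r : ℝ}

omit [SecondCountableTopology E] [SFinite μ] in
lemma setLIntegral_inter_ball_eq_lintegral_indicator (F : E × E → ℝ≥0∞) (x : E) :
    ∫⁻ y in s ∩ ball x r, F (x, y) ∂μ =
      ∫⁻ y in s, {p : E × E | dist p.2 p.1 < r}.indicator F (x, y) ∂μ := by
  rw [inter_comm, ← Measure.restrict_restrict measurableSet_ball,
    ← lintegral_indicator measurableSet_ball]
  rfl

lemma measurableSet_dist_lt (r : ℝ) : MeasurableSet {p : E × E | dist p.2 p.1 < r} :=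
  measurableSet_lt (continuous_snd.dist continuous_fst).measurable measurable_const

lemma Measurable.setLIntegral_inter_ball {F : E × E → ℝ≥0∞} (hF : Measurable F) :
    Measurable fun x => ∫⁻ y in s ∩ ball x r, F (x, y) ∂μ := by
  simp_rw [setLIntegral_inter_ball_eq_lintegral_indicator]
  exact (hF.indicator (measurableSet_dist_lt r)).lintegral_prod_right'

lemma lintegral_setLIntegral_inter_ball_le {f : E → ℝ≥0∞} (hf : Measurable f) {V : ℝ≥0∞}
    (hV : ∀ z, μ (ball z r) ≤ V) :
    ∫⁻ x in s, ∫⁻ y in s ∩ ball x r, f y ∂μ ∂μ ≤ V * ∫⁻ y in s, f y ∂μ := by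
  set K := {p : E × E | dist p.2 p.1 < r}.indicator fun p => f p.2
  have hK : Measurable K := (hf.comp measurable_snd).indicator (measurableSet_dist_lt r)
  have hK_swap : ∀ x y, K (x, y) = (ball y r).indicator (fun _ => f y) x := fun x y => by
    simp only [K, indicator, mem_ofPred_eq, mem_ball']
  calc ∫⁻ x in s, ∫⁻ y in s ∩ ball x r, f y ∂μ ∂μ
      = ∫⁻ x in s, ∫⁻ y in s, K (x, y) ∂μ ∂μ :=
        lintegral_congr fun x => setLIntegral_inter_ball_eq_lintegral_indicator (fun p => f p.2) x
    _ = ∫⁻ y in s, ∫⁻ x in s, K (x, y) ∂μ ∂μ := lintegral_lintegral_swap hK.aemeasurable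
    _ ≤ ∫⁻ y in s, V * f y ∂μ := lintegral_mono fun y => by
        simp_rw [hK_swap, lintegral_indicator_const measurableSet_ball, mul_comm (f y)]
        gcongr
        exact (Measure.restrict_le_self _).trans (hV y)
    _ = V * ∫⁻ y in s, f y ∂μ := lintegral_const_mul _ hf

lemma lintegral_setLIntegral_inter_ball_enorm_sub_rpow_le {F : Type*} [NormedAddCommGroup F]
    [MeasurableSpace F] [OpensMeasurableSpace F] {u : E → F} (hu : Measurable u) {q : ℝ}
    (hq : 1 ≤ q) {V : ℝ≥0∞} (hV : ∀ z, μ (ball z r) ≤ V) :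
    ∫⁻ x in s, ∫⁻ y in s ∩ ball x r, ‖u x - u y‖ₑ ^ q ∂μ ∂μ ≤
      2 ^ q * V * ∫⁻ x in s, ‖u x‖ₑ ^ q ∂μ := by
  set A := ∫⁻ x in s, ‖u x‖ₑ ^ q ∂μ
  have hf : Measurable fun x => ‖u x‖ₑ ^ q := by fun_prop
  have hg : Measurable fun x => ∫⁻ y in s ∩ ball x r, ‖u y‖ₑ ^ q ∂μ :=
    Measurable.setLIntegral_inter_ball (F := fun p => ‖u p.2‖ₑ ^ q) (by fun_prop)
  have h2 : (2 : ℝ≥0∞) ^ (q - 1) ≠ ⊤ := by finiteness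
  have h2q : (2 : ℝ≥0∞) ^ (q - 1) * 2 = 2 ^ q := by
    simpa using (ENNReal.rpow_add (q - 1) 1 two_ne_zero ENNReal.ofNat_ne_top).symm
  have hpow (a b : F) : ‖a - b‖ₑ ^ q ≤ 2 ^ (q - 1) * (‖a‖ₑ ^ q + ‖b‖ₑ ^ q) :=
    (ENNReal.rpow_le_rpow enorm_sub_le (by linarith)).trans
      (ENNReal.rpow_add_le_mul_rpow_add_rpow _ _ hq)
  have hdiag : ∫⁻ x in s, ∫⁻ _y in s ∩ ball x r, ‖u x‖ₑ ^ q ∂μ ∂μ ≤ V * A :=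
    calc _ ≤ ∫⁻ x in s, V * ‖u x‖ₑ ^ q ∂μ := lintegral_mono fun x => by
          rw [setLIntegral_const, mul_comm]
          gcongr
          exact (measure_mono inter_subset_right).trans (hV x)
      _ = V * A := lintegral_const_mul _ hf
  calc ∫⁻ x in s, ∫⁻ y in s ∩ ball x r, ‖u x - u y‖ₑ ^ q ∂μ ∂μ
      ≤ ∫⁻ x in s, ∫⁻ y in s ∩ ball x r, 2 ^ (q - 1) * (‖u x‖ₑ ^ q + ‖u y‖ₑ ^ q) ∂μ ∂μ :=
        lintegral_mono fun x => lintegral_mono fun y => hpow _ _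
    _ = 2 ^ (q - 1) * (∫⁻ x in s, ∫⁻ _y in s ∩ ball x r, ‖u x‖ₑ ^ q ∂μ ∂μ +
          ∫⁻ x in s, ∫⁻ y in s ∩ ball x r, ‖u y‖ₑ ^ q ∂μ ∂μ) := by
        simp_rw [lintegral_const_mul' _ _ h2, lintegral_add_left measurable_const]
        rw [lintegral_add_right _ hg]
    _ ≤ 2 ^ (q - 1) * (V * A + V * A) := by
        gcongr 2 ^ (q - 1) * ?_
        exact add_le_add hdiag (lintegral_setLIntegral_inter_ball_le hf hV)
    _ = 2 ^ q * V * A := by rw [← two_mul, ← mul_assoc, ← mul_assoc, h2q]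

end BallIntegrals

lemma limsup_nhdsGT_le_iSup_Ioo {F : ℝ → ℝ≥0∞} {a b : ℝ} (hab : a < b) :
    limsup F (𝓝[>] a) ≤ ⨆ ε ∈ Ioo a b, F ε :=
  limsup_le_of_le (by isBoundedDefault) <|
    eventually_of_mem (Ioo_mem_nhdsGT hab) fun _ hε => le_biSup F hε

lemma iSup_Ioo_lt_top_of_limsup_lt_top {F : ℝ → ℝ≥0∞} {a b : ℝ} (hab : a < b)
    (hF : ∀ δ ∈ Ioo a b, ∃ C, C ≠ ⊤ ∧ ∀ ε ∈ Ico δ b, F ε ≤ F δ + C)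
    (h : limsup F (𝓝[>] a) < ⊤) : ⨆ ε ∈ Ioo a b, F ε < ⊤ := by
  obtain ⟨M, hM, hM_top⟩ := exists_between h
  obtain ⟨δ₀, hδ₀, hsmall⟩ :=
    mem_nhdsGT_iff_exists_Ioo_subset.mp (eventually_lt_of_limsup_lt hM)
  obtain ⟨δ, hδ, hδ_lt⟩ := exists_between (lt_min hδ₀ hab)
  have hδ₀' : δ < δ₀ := hδ_lt.trans_le (min_le_left _ _)
  obtain ⟨C, hC, hFC⟩ := hF δ ⟨hδ, hδ_lt.trans_le (min_le_right _ _)⟩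
  refine lt_of_le_of_lt (iSup₂_le fun ε hε => ?_) (ENNReal.add_lt_top.2 ⟨hM_top, hC.lt_top⟩)
  rcases le_total ε δ with hεδ | hδε
  · exact (hsmall ⟨hε.1, hεδ.trans_lt hδ₀'⟩).le.trans le_self_add
  · exact (hFC ε ⟨hδε, hε.2⟩).trans (add_le_add_left (hsmall ⟨hδ, hδ₀'⟩).le _)

section Besov

variable {N d : ℕ} {q : ℝ} {Ω : Set (Euc N)} {u : Euc N → Euc d}

lemma besovInt_congr_ae {v : Euc N → Euc d} (h : u =ᵐ[volume.restrict Ω] v) (ε : ℝ) :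
    besovInt N d Ω u q ε = besovInt N d Ω v q ε := by
  refine lintegral_congr_ae ?_
  filter_upwards [h] with x hx
  refine lintegral_congr_ae ?_
  filter_upwards [ae_mono (Measure.restrict_mono inter_subset_left le_rfl) h] with y hy
  rw [hx, hy]

lemma setLIntegral_besov_le_add (hΩ : MeasurableSet Ω) {δ ε : ℝ} (hδ : 0 < δ) (hδε : δ ≤ ε)
    (x : Euc N) :
    ∫⁻ y in Ω ∩ ball x ε, ‖u x - u y‖ₑ ^ q / (ENNReal.ofReal (ε ^ N) * ‖x - y‖ₑ) ≤
      (∫⁻ y in Ω ∩ ball x δ, ‖u x - u y‖ₑ ^ q / (ENNReal.ofReal (δ ^ N) * ‖x - y‖ₑ)) +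
        (ENNReal.ofReal (δ ^ (N + 1)))⁻¹ * ∫⁻ y in Ω ∩ ball x ε, ‖u x - u y‖ₑ ^ q := by
  have hpow : ENNReal.ofReal (δ ^ N) ≤ ENNReal.ofReal (ε ^ N) :=
    ENNReal.ofReal_le_ofReal (pow_le_pow_left₀ hδ.le hδε N)
  rw [← lintegral_inter_add_sdiff _ _ (measurableSet_ball (x := x) (ε := δ))]
  gcongr ?_ + ?_
  · refine lintegral_mono' (Measure.restrict_mono ?_ le_rfl) fun y => ?_
    · exact fun y hy => ⟨hy.1.1, hy.2⟩
    · gcongr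
  · rw [← lintegral_const_mul' _ _ (by finiteness)]
    refine (setLIntegral_mono' ((hΩ.inter measurableSet_ball).diff measurableSet_ball)
      fun y hy => ?_).trans (lintegral_mono_set sdiff_subset)
    have hxy : ENNReal.ofReal δ ≤ ‖x - y‖ₑ := by
      rw [← ofReal_norm, ← dist_eq_norm, dist_comm]
      exact ENNReal.ofReal_le_ofReal (not_lt.mp hy.2)
    rw [← ENNReal.div_eq_inv_mul, pow_succ, ENNReal.ofReal_mul (by positivity)]
    gcongr

lemma besovInt_le_add (hq : 1 ≤ q) (hΩ : MeasurableSet Ω) (hu : Measurable u) {δ ε : ℝ}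
    (hδ : 0 < δ) (hδε : δ ≤ ε) :
    besovInt N d Ω u q ε ≤ besovInt N d Ω u q δ + (ENNReal.ofReal (δ ^ (N + 1)))⁻¹ *
      (2 ^ q * volume (ball (0 : Euc N) ε) * ∫⁻ x in Ω, ‖u x‖ₑ ^ q) := by
  have hmeas : Measurable fun x =>
      ∫⁻ y in Ω ∩ ball x δ, ‖u x - u y‖ₑ ^ q / (ENNReal.ofReal (δ ^ N) * ‖x - y‖ₑ) :=
    Measurable.setLIntegral_inter_ball
      (F := fun p => ‖u p.1 - u p.2‖ₑ ^ q / (ENNReal.ofReal (δ ^ N) * ‖p.1 - p.2‖ₑ))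
      (by fun_prop)
  calc besovInt N d Ω u q ε
      ≤ ∫⁻ x in Ω, ((∫⁻ y in Ω ∩ ball x δ,
          ‖u x - u y‖ₑ ^ q / (ENNReal.ofReal (δ ^ N) * ‖x - y‖ₑ)) +
          (ENNReal.ofReal (δ ^ (N + 1)))⁻¹ * ∫⁻ y in Ω ∩ ball x ε, ‖u x - u y‖ₑ ^ q) :=
        lintegral_mono fun x => setLIntegral_besov_le_add hΩ hδ hδε x
    _ = besovInt N d Ω u q δ + (ENNReal.ofReal (δ ^ (N + 1)))⁻¹ *
          ∫⁻ x in Ω, ∫⁻ y in Ω ∩ ball x ε, ‖u x - u y‖ₑ ^ q := by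
        rw [lintegral_add_left hmeas, lintegral_const_mul' _ _ (by finiteness)]
        rfl
    _ ≤ _ := by
        gcongr
        exact lintegral_setLIntegral_inter_ball_enorm_sub_rpow_le hu hq
          fun z => (Measure.addHaar_ball_center volume z ε).le

lemma exists_besovInt_le_add (hq : 1 ≤ q) (hΩ : MeasurableSet Ω) (hu : Measurable u)
    (hu_int : ∫⁻ x in Ω, ‖u x‖ₑ ^ q < ⊤) :
    ∀ δ ∈ Ioo (0 : ℝ) 1, ∃ C, C ≠ ⊤ ∧
      ∀ ε ∈ Ico δ 1, besovInt N d Ω u q ε ≤ besovInt N d Ω u q δ + C := by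
  rintro δ ⟨hδ, -⟩
  refine ⟨(ENNReal.ofReal (δ ^ (N + 1)))⁻¹ *
    (2 ^ q * volume (ball (0 : Euc N) 1) * ∫⁻ x in Ω, ‖u x‖ₑ ^ q), ?_, fun ε hε => ?_⟩
  · have : 0 < δ ^ (N + 1) := by positivity
    have : volume (ball (0 : Euc N) 1) ≠ ⊤ := measure_ball_lt_top.ne
    finiteness
  · refine (besovInt_le_add hq hΩ hu hδ hε.1).trans ?_
    gcongr
    exact hε.2.le

end Besov

/-- Let `Ω ⊆ ℝ^N` be open, `q ∈ [1,∞)` and `u ∈ L^q(Ω, ℝ^d)`. Then the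
Besov `q`-constant `B̂_{u,q}(Ω) = sup_{ε ∈ (0,1)}` of the double integral is finite if and
only if the upper infinitesimal Besov `q`-constant `B̄_{u,q}(Ω) = limsup_{ε→0+}` of the same
double integral is finite. -/
theorem besov_constant_finiteness_equiv
    {N d : ℕ} {q : ℝ} (hq : 1 ≤ q)
    {Ω : Set (Euc N)} (hΩ : IsOpen Ω) (u : Euc N → Euc d)
    (hu : MemLp u (ENNReal.ofReal q) (volume.restrict Ω)) :
    (⨆ ε ∈ Ioo (0:ℝ) 1, besovInt N d Ω u q ε) < ⊤ ↔
      limsup (fun ε => besovInt N d Ω u q ε) (𝓝[>] (0:ℝ)) < ⊤ := by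
  obtain ⟨v, hv, huv⟩ : ∃ v, Measurable v ∧ u =ᵐ[volume.restrict Ω] v :=
    ⟨_, hu.1.aemeasurable.measurable_mk, hu.1.aemeasurable.ae_eq_mk⟩
  have hv_int : ∫⁻ x in Ω, ‖v x‖ₑ ^ q < ⊤ := by
    have hq₀ : ENNReal.ofReal q ≠ 0 := (ENNReal.ofReal_pos.2 (by linarith)).ne'
    simpa [ENNReal.toReal_ofReal (zero_le_one.trans hq)] using
      lintegral_rpow_enorm_lt_top_of_eLpNorm_lt_top hq₀ ENNReal.ofReal_ne_top
        (hu.ae_eq huv).eLpNorm_lt_top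
  simp only [besovInt_congr_ae huv]
  exact ⟨(limsup_nhdsGT_le_iSup_Ioo one_pos).trans_lt,
    iSup_Ioo_lt_top_of_limsup_lt_top one_pos
      (exists_besovInt_le_add hq hΩ.measurableSet hv hv_int)⟩
end
end

section
/- Let 1 ≤ q < ∞ and let u : ℝ^N → ℝ^d be a function for which there exist constants 0 < A_1, A_2 < ∞ with A_1·|x−y|^{1/q} ≤ |u(x)−u(y)| ≤ A_2·|x−y|^{1/q} for all x, y ∈ ℝ^N. Then for every open, bounded, nonempty set Ω ⊂ ℝ^N one has 0 < α(N)·A_1^q·L^N(Ω) ≤ B̲_{u,q}(Ω) ≤ B̄_{u,q}(Ω) ≤ α(N)·A_2^q·L^N(Ω) < ∞. In particular u ∈ BV^q(Ω,ℝ^d), and since u is continuous (so J'_u = ∅), the q-jump inequality C_N ∫_{J'_u} |u^{j'}|^q dH^{N-1} ≤ B̲_{u,q}(Ω) is strict for u. -/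
open MeasureTheory Metric Filter Set Topology
open scoped ENNReal NNReal

noncomputable section

/-!
The two-sided Hölder bounds pin the integrand `|u(x) - u(y)|^q / |x - y|` between `A₁^q` and
`A₂^q`, so `ε^{-N}` times its integral over `B_ε(x)` lies between `α(N) A₁^q` and `α(N) A₂^q`
whenever that ball lies in `Ω`. The upper bound therefore holds for every `ε`; the lower one holds
over any compact `K ⊆ Ω` once `ε` is below the distance from `K` to `∂Ω`, and inner regularity of
Lebesgue measure upgrades `L^N(K)` to `L^N(Ω)`. The upper bound also makes `u` continuous, and a
continuous function has no approximate jump: on both half balls around `x` it stays close to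
`u(x)`, so no constant approximates `u - h` on one side and `u` on the other. Hence `J'_u = ∅`, the
jump side of the inequality is `0`, while `B̲_{u,q}(Ω) ≥ α(N) A₁^q L^N(Ω) > 0`.
-/

def besovIntegrand {N d : ℕ} (u : Euc N → Euc d) (q ε : ℝ) (x y : Euc N) : ℝ≥0∞ :=
  (‖u x - u y‖₊ : ℝ≥0∞) ^ q / (ENNReal.ofReal (ε ^ N) * (‖x - y‖₊ : ℝ≥0∞))

lemma holderWith_of_dist_le {X Y : Type*} [PseudoMetricSpace X] [PseudoMetricSpace Y]
    {C r : ℝ≥0} {f : X → Y} (h : ∀ x y, dist (f x) (f y) ≤ C * dist x y ^ (r : ℝ)) :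
    HolderWith C r f := fun x y => by
  rw [edist_dist, edist_dist, ENNReal.ofReal_rpow_of_nonneg dist_nonneg r.coe_nonneg,
    ← ENNReal.ofReal_coe_nnreal, ← ENNReal.ofReal_mul C.coe_nonneg]
  exact ENNReal.ofReal_le_ofReal (h x y)

lemma Continuous.memLp_restrict_of_isBounded {X E : Type*} [PseudoMetricSpace X] [ProperSpace X]
    [MeasurableSpace X] [OpensMeasurableSpace X] {μ : Measure X} [IsFiniteMeasureOnCompacts μ]
    [NormedAddCommGroup E] {f : X → E} (hf : Continuous f) {s : Set X}
    (hs : Bornology.IsBounded s) (p : ℝ≥0∞) : MemLp f p (μ.restrict s) := by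
  have hK := hs.isCompact_closure
  obtain ⟨C, hC⟩ := hK.exists_bound_of_continuousOn hf.continuousOn
  have : IsFiniteMeasure (μ.restrict (closure s)) :=
    isFiniteMeasure_restrict.2 hK.measure_lt_top.ne
  exact (MemLp.of_bound hf.aestronglyMeasurable C
    (ae_restrict_of_forall_mem isClosed_closure.measurableSet hC)).mono_measure
    (Measure.restrict_mono subset_closure le_rfl)

lemma coe_nnnorm_sub_ne_zero {E : Type*} [NormedAddCommGroup E] {x y : E} (h : x ≠ y) :
    (‖x - y‖₊ : ℝ≥0∞) ≠ 0 := by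
  simpa [sub_eq_zero] using h

section Besov

variable {N d : ℕ} {q A : ℝ} {u : Euc N → Euc d}

lemma ofReal_rpow_mul_nnnorm (hq : q ≠ 0) (hA : 0 ≤ A) (w : Euc N) :
    ENNReal.ofReal (A ^ q) * (‖w‖₊ : ℝ≥0∞) = ENNReal.ofReal ((A * ‖w‖ ^ (1 / q)) ^ q) := by
  rw [Real.mul_rpow hA (by positivity), one_div, Real.rpow_inv_rpow (norm_nonneg _) hq,
    ENNReal.ofReal_mul (by positivity), ofReal_norm, enorm_eq_nnnorm]

lemma nnnorm_rpow_eq_ofReal (hq : 0 ≤ q) (v : Euc d) :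
    (‖v‖₊ : ℝ≥0∞) ^ q = ENNReal.ofReal (‖v‖ ^ q) := by
  rw [← ENNReal.ofReal_rpow_of_nonneg (norm_nonneg _) hq, ofReal_norm, enorm_eq_nnnorm]

lemma besovIntegrand_le (hq : 0 < q) (hA : 0 ≤ A)
    (hupp : ∀ x y, ‖u x - u y‖ ≤ A * ‖x - y‖ ^ (1 / q)) (ε : ℝ) (x y : Euc N) :
    besovIntegrand u q ε x y ≤ ENNReal.ofReal (A ^ q) / ENNReal.ofReal (ε ^ N) := by
  have hnum : (‖u x - u y‖₊ : ℝ≥0∞) ^ q ≤ ENNReal.ofReal (A ^ q) * (‖x - y‖₊ : ℝ≥0∞) := by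
    rw [nnnorm_rpow_eq_ofReal hq.le, ofReal_rpow_mul_nnnorm hq.ne' hA]
    exact ENNReal.ofReal_le_ofReal (Real.rpow_le_rpow (norm_nonneg _) (hupp x y) hq.le)
  rcases eq_or_ne x y with rfl | hxy
  · simp [besovIntegrand, ENNReal.zero_rpow_of_pos hq]
  · rw [besovIntegrand, ← ENNReal.mul_div_mul_right (ENNReal.ofReal (A ^ q)) _
      (coe_nnnorm_sub_ne_zero hxy) ENNReal.coe_ne_top]
    exact ENNReal.div_le_div_right hnum _

lemma le_besovIntegrand (hq : 0 < q) (hA : 0 ≤ A)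
    (hlow : ∀ x y, A * ‖x - y‖ ^ (1 / q) ≤ ‖u x - u y‖) (ε : ℝ) {x y : Euc N} (hxy : x ≠ y) :
    ENNReal.ofReal (A ^ q) / ENNReal.ofReal (ε ^ N) ≤ besovIntegrand u q ε x y := by
  have hnum : ENNReal.ofReal (A ^ q) * (‖x - y‖₊ : ℝ≥0∞) ≤ (‖u x - u y‖₊ : ℝ≥0∞) ^ q := by
    rw [nnnorm_rpow_eq_ofReal hq.le, ofReal_rpow_mul_nnnorm hq.ne' hA]
    exact ENNReal.ofReal_le_ofReal (Real.rpow_le_rpow (by positivity) (hlow x y) hq.le)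
  rw [besovIntegrand,
    ← ENNReal.mul_div_mul_right _ _ (coe_nnnorm_sub_ne_zero hxy) ENNReal.coe_ne_top]
  exact ENNReal.div_le_div_right hnum _

lemma ofReal_div_pow_mul_volume_ball (c : ℝ≥0∞) (x : Euc N) {ε : ℝ} (hε : 0 < ε) :
    c / ENNReal.ofReal (ε ^ N) * volume (ball x ε) = c * volume (ball (0 : Euc N) 1) := by
  rw [Measure.addHaar_ball_of_pos volume x hε, finrank_euclideanSpace_fin, ← mul_assoc,
    ENNReal.div_mul_cancel (ENNReal.ofReal_pos.2 (pow_pos hε N)).ne' ENNReal.ofReal_ne_top]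

lemma besovInt_le (hq : 0 < q) (hA : 0 ≤ A)
    (hupp : ∀ x y, ‖u x - u y‖ ≤ A * ‖x - y‖ ^ (1 / q)) (Ω : Set (Euc N)) {ε : ℝ}
    (hε : 0 < ε) :
    besovInt N d Ω u q ε ≤ volume (ball (0 : Euc N) 1) * ENNReal.ofReal (A ^ q) * volume Ω := by
  have hinner (x : Euc N) : ∫⁻ y in Ω ∩ ball x ε, besovIntegrand u q ε x y ≤
      ENNReal.ofReal (A ^ q) * volume (ball (0 : Euc N) 1) :=
    calc ∫⁻ y in Ω ∩ ball x ε, besovIntegrand u q ε x y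
        ≤ ∫⁻ _ in ball x ε, ENNReal.ofReal (A ^ q) / ENNReal.ofReal (ε ^ N) :=
          lintegral_mono' (Measure.restrict_mono inter_subset_right le_rfl)
            (besovIntegrand_le hq hA hupp ε x)
      _ = ENNReal.ofReal (A ^ q) * volume (ball (0 : Euc N) 1) := by
          rw [setLIntegral_const, ofReal_div_pow_mul_volume_ball _ x hε]
  calc besovInt N d Ω u q ε
      ≤ ∫⁻ _ in Ω, ENNReal.ofReal (A ^ q) * volume (ball (0 : Euc N) 1) := lintegral_mono hinner
    _ = volume (ball (0 : Euc N) 1) * ENNReal.ofReal (A ^ q) * volume Ω := by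
        rw [setLIntegral_const, mul_comm (ENNReal.ofReal _)]

lemma le_besovInt [Nontrivial (Euc N)] (hq : 0 < q) (hA : 0 ≤ A)
    (hlow : ∀ x y, A * ‖x - y‖ ^ (1 / q) ≤ ‖u x - u y‖) {Ω K : Set (Euc N)} {ε : ℝ}
    (hε : 0 < ε) (hK : MeasurableSet K) (hKΩ : K ⊆ Ω) (hball : ∀ x ∈ K, ball x ε ⊆ Ω) :
    volume (ball (0 : Euc N) 1) * ENNReal.ofReal (A ^ q) * volume K ≤
      besovInt N d Ω u q ε := by
  have hinner (x : Euc N) (hx : x ∈ K) : ENNReal.ofReal (A ^ q) * volume (ball (0 : Euc N) 1) ≤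
      ∫⁻ y in Ω ∩ ball x ε, besovIntegrand u q ε x y :=
    calc ENNReal.ofReal (A ^ q) * volume (ball (0 : Euc N) 1)
        = ∫⁻ _ in ball x ε, ENNReal.ofReal (A ^ q) / ENNReal.ofReal (ε ^ N) := by
          rw [setLIntegral_const, ofReal_div_pow_mul_volume_ball _ x hε]
      _ ≤ ∫⁻ y in Ω ∩ ball x ε, besovIntegrand u q ε x y := by
          rw [inter_eq_self_of_subset_right (hball x hx)]
          refine lintegral_mono_ae (ae_restrict_of_ae ?_)
          filter_upwards [compl_mem_ae_iff.2 (measure_singleton x)] with y hy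
          exact le_besovIntegrand hq hA hlow ε (Ne.symm hy)
  calc volume (ball (0 : Euc N) 1) * ENNReal.ofReal (A ^ q) * volume K
      = ∫⁻ _ in K, ENNReal.ofReal (A ^ q) * volume (ball (0 : Euc N) 1) := by
        rw [setLIntegral_const, mul_comm (volume _)]
    _ ≤ ∫⁻ x in K, ∫⁻ y in Ω ∩ ball x ε, besovIntegrand u q ε x y :=
        setLIntegral_mono' hK hinner
    _ ≤ besovInt N d Ω u q ε := lintegral_mono' (Measure.restrict_mono hKΩ le_rfl) le_rfl

lemma le_liminf_besovInt [Nontrivial (Euc N)] (hq : 0 < q) (hA : 0 ≤ A)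
    (hlow : ∀ x y, A * ‖x - y‖ ^ (1 / q) ≤ ‖u x - u y‖) {Ω : Set (Euc N)} (hΩ : IsOpen Ω) :
    volume (ball (0 : Euc N) 1) * ENNReal.ofReal (A ^ q) * volume Ω ≤
      liminf (fun ε => besovInt N d Ω u q ε) (𝓝[>] (0 : ℝ)) := by
  rw [hΩ.measure_eq_iSup_isCompact]
  simp only [ENNReal.mul_iSup, iSup_le_iff]
  intro K hKΩ hK
  obtain ⟨δ, hδ, hthick⟩ := hK.exists_thickening_subset_open hΩ hKΩ
  refine le_liminf_of_le (by isBoundedDefault) ?_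
  filter_upwards [Ioo_mem_nhdsGT hδ] with ε hε
  exact le_besovInt hq hA hlow hε.1 hK.measurableSet hKΩ fun x hx =>
    (ball_subset_ball hε.2.le).trans ((ball_subset_thickening hx δ).trans hthick)

lemma limsup_besovInt_le (hq : 0 < q) (hA : 0 ≤ A)
    (hupp : ∀ x y, ‖u x - u y‖ ≤ A * ‖x - y‖ ^ (1 / q)) (Ω : Set (Euc N)) :
    limsup (fun ε => besovInt N d Ω u q ε) (𝓝[>] (0 : ℝ)) ≤
      volume (ball (0 : Euc N) 1) * ENNReal.ofReal (A ^ q) * volume Ω :=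
  limsup_le_of_le (by isBoundedDefault) <|
    eventually_nhdsWithin_of_forall fun _ hε => besovInt_le hq hA hupp Ω hε

end Besov

section JumpSet

variable {N d : ℕ}

lemma le_eavg {s : Set (Euc N)} (hs : MeasurableSet s) (h0 : volume s ≠ 0) (htop : volume s ≠ ⊤)
    {f : Euc N → ℝ≥0∞} {c : ℝ≥0∞} (h : ∀ y ∈ s, c ≤ f y) : c ≤ eavg s f := by
  rw [eavg, ENNReal.le_div_iff_mul_le (Or.inl h0) (Or.inl htop), ← setLIntegral_const]
  exact setLIntegral_mono' hs h

lemma halfBallM_eq_halfBallP_neg (x ν : Euc N) (ρ : ℝ) :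
    halfBallM x ν ρ = halfBallP x (-ν) ρ := by
  ext y
  simp [halfBallM, halfBallP, inner_neg_left]

lemma isOpen_halfBallP (x ν : Euc N) (ρ : ℝ) : IsOpen (halfBallP x ν ρ) := by
  change IsOpen (ball x ρ ∩ {y | 0 < inner ℝ ν (y - x)})
  exact isOpen_ball.inter
    (isOpen_lt continuous_const (continuous_const.inner (continuous_id.sub continuous_const)))

lemma volume_halfBallP_pos {ν : Euc N} (hν : ν ≠ 0) (x : Euc N) {ρ : ℝ} (hρ : 0 < ρ) :
    0 < volume (halfBallP x ν ρ) := by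
  have hν' : 0 < ‖ν‖ := norm_pos_iff.2 hν
  refine (isOpen_halfBallP x ν ρ).measure_pos volume ⟨x + (ρ / (2 * ‖ν‖)) • ν, ?_, ?_⟩
  · rw [mem_ball, dist_eq_norm, add_sub_cancel_left, norm_smul,
      Real.norm_of_nonneg (by positivity)]
    field_simp
    linarith
  · rw [add_sub_cancel_left, real_inner_smul_right, real_inner_self_eq_norm_sq]
    positivity

lemma volume_halfBallP_lt_top (x ν : Euc N) (ρ : ℝ) : volume (halfBallP x ν ρ) < ⊤ :=
  (measure_mono fun _ hy => hy.1).trans_lt measure_ball_lt_top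

lemma le_eavg_halfBallP {ν : Euc N} (hν : ν ≠ 0) {x : Euc N} {ρ : ℝ} (hρ : 0 < ρ)
    {f : Euc N → ℝ≥0∞} {c : ℝ≥0∞} (h : ∀ y ∈ ball x ρ, c ≤ f y) : c ≤ eavg (halfBallP x ν ρ) f :=
  le_eavg (isOpen_halfBallP x ν ρ).measurableSet (volume_halfBallP_pos hν x hρ).ne'
    (volume_halfBallP_lt_top x ν ρ).ne fun y hy => h y hy.1

lemma ofReal_norm_sub_le_nnnorm {E : Type*} [NormedAddCommGroup E] {a b : E} {δ : ℝ}
    (h : ‖a - b‖ ≤ δ) : ENNReal.ofReal (‖a‖ - δ) ≤ ‖b‖₊ := by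
  rw [← enorm_eq_nnnorm, ← ofReal_norm]
  refine ENNReal.ofReal_le_ofReal ?_
  linarith [norm_sub_norm_le a b]

lemma ofReal_sub_le_iInf_eavg_halfBall {u : Euc N → Euc d} {x ν : Euc N} {h : Euc d} {ρ δ : ℝ}
    (hν : ν ≠ 0) (hρ : 0 < ρ) (hosc : ∀ y ∈ ball x ρ, ‖u x - u y‖ ≤ δ) :
    ENNReal.ofReal (‖h‖ - 2 * δ) ≤ ⨅ c : Euc d,
      ((eavg (halfBallP x ν ρ) fun y => (‖u y - h - c‖₊ : ℝ≥0∞)) +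
        eavg (halfBallM x ν ρ) fun y => (‖u y - c‖₊ : ℝ≥0∞)) := by
  refine le_iInf fun c => ?_
  have htri : ‖h‖ ≤ ‖u x - h - c‖ + ‖u x - c‖ := by
    simpa [add_comm] using norm_sub_le (u x - c) (u x - h - c)
  calc ENNReal.ofReal (‖h‖ - 2 * δ)
      ≤ ENNReal.ofReal (‖u x - h - c‖ - δ) + ENNReal.ofReal (‖u x - c‖ - δ) :=
        (ENNReal.ofReal_le_ofReal (by linarith)).trans ENNReal.ofReal_add_le
    _ ≤ _ := by
        rw [halfBallM_eq_halfBallP_neg]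
        gcongr
        · exact le_eavg_halfBallP hν hρ fun y hy =>
            ofReal_norm_sub_le_nnnorm (by simpa using hosc y hy)
        · exact le_eavg_halfBallP (neg_ne_zero.2 hν) hρ fun y hy =>
            ofReal_norm_sub_le_nnnorm (by simpa using hosc y hy)

lemma not_isGenJump_of_continuousAt {u : Euc N → Euc d} {x : Euc N} (hu : ContinuousAt u x)
    (h : Euc d) (ν : Euc N) : ¬ IsGenJump u x h ν := by
  rintro ⟨hν, hh, hlim⟩
  have hh' : 0 < ‖h‖ := norm_pos_iff.2 hh
  obtain ⟨ρ₀, hρ₀, hosc⟩ := Metric.continuousAt_iff.1 hu (‖h‖ / 4) (by positivity)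
  have hν' : ν ≠ 0 := by rintro rfl; simp at hν
  have hbound : ∀ᶠ ρ in 𝓝[>] (0 : ℝ), ENNReal.ofReal (‖h‖ / 2) ≤ ⨅ c : Euc d,
      ((eavg (halfBallP x ν ρ) fun y => (‖u y - h - c‖₊ : ℝ≥0∞)) +
        eavg (halfBallM x ν ρ) fun y => (‖u y - c‖₊ : ℝ≥0∞)) := by
    filter_upwards [Ioo_mem_nhdsGT hρ₀] with ρ hρ
    have := ofReal_sub_le_iInf_eavg_halfBall (h := h) (δ := ‖h‖ / 4) hν' hρ.1 fun y hy => by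
      rw [← dist_eq_norm, dist_comm]
      exact (hosc ((mem_ball.1 hy).trans hρ.2)).le
    rwa [show ‖h‖ - 2 * (‖h‖ / 4) = ‖h‖ / 2 by ring] at this
  exact (ENNReal.ofReal_pos.2 (half_pos hh')).not_ge (ge_of_tendsto hlim hbound)

lemma genJumpSet_eq_empty_of_continuous {u : Euc N → Euc d} (hu : Continuous u)
    (Ω : Set (Euc N)) : genJumpSet Ω u = ∅ :=
  eq_empty_iff_forall_notMem.2 fun _ ⟨_, h, ν, hjump⟩ =>
    not_isGenJump_of_continuousAt hu.continuousAt h ν hjump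

end JumpSet

/-- Let `1 ≤ q < ∞` and let `u : ℝ^N → ℝ^d` satisfy
`A₁|x−y|^{1/q} ≤ |u(x)−u(y)| ≤ A₂|x−y|^{1/q}` for all `x, y` and some `0 < A₁, A₂ < ∞`.
Then for every open, bounded, nonempty `Ω ⊆ ℝ^N` one has
`0 < α(N)A₁^q L^N(Ω) ≤ B̲_{u,q}(Ω) ≤ B̄_{u,q}(Ω) ≤ α(N)A₂^q L^N(Ω) < ∞`
(where `α(N) = L^N(B_1(0))`); in particular `u ∈ BV^q(Ω, ℝ^d)`, `J'_u = ∅`, and the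
`q`-jump inequality `C_N ∫_{J'_u} |u^{j'}|^q dH^{N−1} ≤ B̲_{u,q}(Ω)` is strict. -/
theorem strict_jump_inequality_example
    {N d : ℕ} (hN : 0 < N) {q : ℝ} (hq : 1 ≤ q)
    (u : Euc N → Euc d) (A₁ A₂ : ℝ) (hA₁ : 0 < A₁) (hA₂ : 0 < A₂)
    (hlow : ∀ x y : Euc N, A₁ * ‖x - y‖ ^ (1 / q) ≤ ‖u x - u y‖)
    (hupp : ∀ x y : Euc N, ‖u x - u y‖ ≤ A₂ * ‖x - y‖ ^ (1 / q))
    {Ω : Set (Euc N)} (hΩ : IsOpen Ω) (hbd : Bornology.IsBounded Ω) (hne : Ω.Nonempty) :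
    (0 < volume (ball (0 : Euc N) 1) * ENNReal.ofReal (A₁ ^ q) * volume Ω) ∧
    (volume (ball (0 : Euc N) 1) * ENNReal.ofReal (A₁ ^ q) * volume Ω ≤
      liminf (fun ε => besovInt N d Ω u q ε) (𝓝[>] (0:ℝ))) ∧
    (liminf (fun ε => besovInt N d Ω u q ε) (𝓝[>] (0:ℝ)) ≤
      limsup (fun ε => besovInt N d Ω u q ε) (𝓝[>] (0:ℝ))) ∧
    (limsup (fun ε => besovInt N d Ω u q ε) (𝓝[>] (0:ℝ)) ≤
      volume (ball (0 : Euc N) 1) * ENNReal.ofReal (A₂ ^ q) * volume Ω) ∧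
    (volume (ball (0 : Euc N) 1) * ENNReal.ofReal (A₂ ^ q) * volume Ω < ⊤) ∧
    (MemLp u (ENNReal.ofReal q) (volume.restrict Ω) ∧
      (⨆ ε ∈ Ioo (0:ℝ) 1, besovInt N d Ω u q ε) < ⊤) ∧
    genJumpSet Ω u = ∅ ∧
    ∀ jmp : Euc N → Euc d,
      ((N : ℝ≥0∞)⁻¹ *
          ∫⁻ z in sphere (0 : Euc N) 1, (‖z ⟨0, hN⟩‖₊ : ℝ≥0∞) ∂(μH[(N : ℝ) - 1])) *
          (∫⁻ x in genJumpSet Ω u, (‖jmp x‖₊ : ℝ≥0∞) ^ q ∂(μH[(N : ℝ) - 1]))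
        < liminf (fun ε => besovInt N d Ω u q ε) (𝓝[>] (0:ℝ)) := by
  have hq' : 0 < q := one_pos.trans_le hq
  have : Nontrivial (Euc N) := Module.finrank_pos_iff (R := ℝ) |>.1 (by simpa using hN)
  have hu : Continuous u :=
    (holderWith_of_dist_le (C := ⟨A₂, hA₂.le⟩) (r := ⟨1 / q, by positivity⟩) fun x y => by
      rw [dist_eq_norm, dist_eq_norm]; exact hupp x y).continuous
      (NNReal.coe_pos.1 (one_div_pos.2 hq'))
  have hlower := le_liminf_besovInt hq' hA₁.le hlow hΩ
  have hpos : 0 < volume (ball (0 : Euc N) 1) * ENNReal.ofReal (A₁ ^ q) * volume Ω :=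
    ENNReal.mul_pos (mul_ne_zero (measure_ball_pos volume 0 one_pos).ne'
      (ENNReal.ofReal_pos.2 (Real.rpow_pos_of_pos hA₁ q)).ne') (hΩ.measure_pos volume hne).ne'
  have hfin : volume (ball (0 : Euc N) 1) * ENNReal.ofReal (A₂ ^ q) * volume Ω < ⊤ :=
    ENNReal.mul_lt_top (ENNReal.mul_lt_top measure_ball_lt_top ENNReal.ofReal_lt_top)
      hbd.measure_lt_top
  refine ⟨hpos, hlower, liminf_le_limsup, limsup_besovInt_le hq' hA₂.le hupp Ω, hfin,
    ⟨hu.memLp_restrict_of_isBounded hbd _,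
      (iSup₂_le fun ε hε => besovInt_le hq' hA₂.le hupp Ω hε.1).trans_lt hfin⟩,
    genJumpSet_eq_empty_of_continuous hu Ω, fun jmp => ?_⟩
  rw [genJumpSet_eq_empty_of_continuous hu Ω, Measure.restrict_empty, lintegral_zero_measure,
    mul_zero]
  exact hpos.trans_le hlower
end
end

section
/- Let Ω ⊂ ℝ^N be an open set, let q ∈ [1,∞) and r ∈ (0,1), and let u ∈ W^{r,q}_loc(Ω,ℝ^d). Then for every open set Ω_0 compactly contained in Ω one has ∫_{Ω_0} sup_{δ∈(0,∞)} ( ∫_{B_1(0)} χ_{Ω_0}(x+δz) · |u(x+δz) − u(x)|^q / δ^{rq} dz ) dx < ∞. -/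
open MeasureTheory Metric Filter Set Topology
open scoped ENNReal NNReal

noncomputable section

/-!
For fixed `x` and `δ`, the substitution `y = x + δ z` turns the inner integral into
`δ^{-N-rq} ∫_{B_δ(x) ∩ Ω₀} |u(y) - u(x)|^q dy`, and `δ^{-N-rq} ≤ |x - y|^{-N-rq}` on `B_δ(x)`.
So the supremum over `δ` is bounded, for every `x`, by the inner Gagliardo integral
`∫_{Ω₀} |u(x) - u(y)|^q / |x - y|^{N+rq} dy`, whose integral over `Ω₀` is finite since
`u ∈ W^{r,q}(Ω₀)`.
-/

open Module

theorem ENNReal.ofReal_inv_pow_mul_div_ofReal_rpow {δ : ℝ} (hδ : 0 < δ) (n : ℕ) (s : ℝ)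
    (a : ℝ≥0∞) :
    ENNReal.ofReal ((δ ^ n)⁻¹) * (a / ENNReal.ofReal (δ ^ s)) =
      a / ENNReal.ofReal δ ^ ((n : ℝ) + s) := by
  have h0 : ENNReal.ofReal δ ≠ 0 := by simpa using hδ
  rw [ENNReal.rpow_add _ _ h0 ENNReal.ofReal_ne_top, ENNReal.rpow_natCast,
    ← ENNReal.ofReal_rpow_of_pos hδ, ENNReal.ofReal_inv_of_pos (by positivity),
    ENNReal.ofReal_pow hδ.le, div_eq_mul_inv, div_eq_mul_inv,
    ENNReal.mul_inv (by simp [h0]) (by simp)]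
  ring

section
variable {E : Type*} [NormedAddCommGroup E] [NormedSpace ℝ E] [MeasurableSpace E] [BorelSpace E]
  [FiniteDimensional ℝ E] (μ : Measure E) [μ.IsAddHaarMeasure]

theorem lintegral_comp_smul_of_pos (f : E → ℝ≥0∞) {R : ℝ} (hR : 0 < R) :
    ∫⁻ x, f (R • x) ∂μ = ENNReal.ofReal ((R ^ finrank ℝ E)⁻¹) * ∫⁻ x, f x ∂μ := by
  refine (lintegral_map_equiv f (MeasurableEquiv.smul₀ R hR.ne')).symm.trans ?_
  rw [MeasurableEquiv.coe_smul₀, Measure.map_addHaar_smul μ hR.ne', lintegral_smul_measure,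
    abs_of_pos (by positivity), smul_eq_mul]

theorem setLIntegral_ball_zero_one_comp_add_smul (f : E → ℝ≥0∞) (x : E) {δ : ℝ} (hδ : 0 < δ) :
    ∫⁻ z in ball 0 1, f (x + δ • z) ∂μ =
      ENNReal.ofReal ((δ ^ finrank ℝ E)⁻¹) * ∫⁻ y in ball x δ, f y ∂μ := by
  have hpre : (fun z => x + δ • z) ⁻¹' ball x δ = ball 0 1 := by
    ext z
    simp [norm_smul, abs_of_pos hδ, hδ]
  rw [← lintegral_indicator measurableSet_ball, ← lintegral_indicator measurableSet_ball, ← hpre]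
  simp_rw [← Function.comp_apply (f := f) (g := fun z => x + δ • z), indicator_comp_right]
  rw [lintegral_comp_smul_of_pos μ (fun w => (ball x δ).indicator f (x + w)) hδ,
    lintegral_add_left_eq_self]

theorem setLIntegral_ball_zero_one_indicator_comp_add_smul_div_le {s : Set E}
    (hs : MeasurableSet s) (F : E → ℝ≥0∞) (x : E) {δ t : ℝ} (hδ : 0 < δ) (ht : 0 ≤ t) :
    ∫⁻ z in ball 0 1, s.indicator (fun _ => 1) (x + δ • z) * F (x + δ • z) /
        ENNReal.ofReal (δ ^ t) ∂μ ≤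
      ∫⁻ y in s, F y / ‖x - y‖₊ ^ ((finrank ℝ E : ℝ) + t) ∂μ := by
  rw [setLIntegral_ball_zero_one_comp_add_smul μ
      (fun y => s.indicator (fun _ => 1) y * F y / ENNReal.ofReal (δ ^ t)) x hδ,
    ← lintegral_const_mul' _ _ ENNReal.ofReal_ne_top]
  calc ∫⁻ y in ball x δ, ENNReal.ofReal ((δ ^ finrank ℝ E)⁻¹) *
          (s.indicator (fun _ => 1) y * F y / ENNReal.ofReal (δ ^ t)) ∂μ
      ≤ ∫⁻ y in ball x δ,
          s.indicator (fun y => F y / ‖x - y‖₊ ^ ((finrank ℝ E : ℝ) + t)) y ∂μ := by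
        refine setLIntegral_mono' measurableSet_ball fun y hy => ?_
        by_cases hys : y ∈ s
        · have hxy : (‖x - y‖₊ : ℝ≥0∞) ≤ ENNReal.ofReal δ := by
            rw [← ENNReal.ofReal_coe_nnreal, coe_nnnorm, ← dist_eq_norm, dist_comm]
            exact ENNReal.ofReal_le_ofReal (mem_ball.1 hy).le
          simp only [indicator_of_mem hys, one_mul]
          rw [ENNReal.ofReal_inv_pow_mul_div_ofReal_rpow hδ]
          exact ENNReal.div_le_div_left (ENNReal.rpow_le_rpow hxy (by positivity)) _
        · simp [hys]
    _ ≤ ∫⁻ y, s.indicator (fun y => F y / ‖x - y‖₊ ^ ((finrank ℝ E : ℝ) + t)) y ∂μ :=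
        setLIntegral_le_lintegral _ _
    _ = ∫⁻ y in s, F y / ‖x - y‖₊ ^ ((finrank ℝ E : ℝ) + t) ∂μ := lintegral_indicator hs _

end

theorem frac_sobolev_sup_bound_general
    {N d : ℕ} {Ω : Set (Euc N)}
    {q r : ℝ} (hq : 1 ≤ q) (hr0 : 0 < r)
    (u : Euc N → Euc d)
    (hu : ∀ Ω₀ : Set (Euc N), IsOpen Ω₀ → IsCompact (closure Ω₀) → closure Ω₀ ⊆ Ω →
      MemFracSobolev N d Ω₀ u r q) :
    ∀ Ω₀ : Set (Euc N), IsOpen Ω₀ → IsCompact (closure Ω₀) → closure Ω₀ ⊆ Ω →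
      (∫⁻ x in Ω₀, ⨆ (δ : ℝ) (_ : 0 < δ),
          ∫⁻ z in ball (0 : Euc N) 1,
            Ω₀.indicator (fun _ => (1 : ℝ≥0∞)) (x + δ • z) *
              (‖u (x + δ • z) - u x‖₊ : ℝ≥0∞) ^ q / ENNReal.ofReal (δ ^ (r * q))) < ⊤ := by
  intro Ω₀ hΩ₀ hc hsub
  refine lt_of_le_of_lt (lintegral_mono fun x => iSup₂_le fun δ hδ => ?_) (hu Ω₀ hΩ₀ hc hsub).2
  calc _ ≤ ∫⁻ y in Ω₀, (‖u y - u x‖₊ : ℝ≥0∞) ^ q /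
          (‖x - y‖₊ : ℝ≥0∞) ^ ((finrank ℝ (Euc N) : ℝ) + r * q) :=
        setLIntegral_ball_zero_one_indicator_comp_add_smul_div_le volume hΩ₀.measurableSet
          (fun y => (‖u y - u x‖₊ : ℝ≥0∞) ^ q) x hδ (by positivity)
    _ = ∫⁻ y in Ω₀, (‖u x - u y‖₊ : ℝ≥0∞) ^ q / (‖x - y‖₊ : ℝ≥0∞) ^ ((N : ℝ) + r * q) := by
        simp only [finrank_euclideanSpace_fin, ← enorm_eq_nnnorm, enorm_sub_rev (u _) (u x)]

/-- Let `Ω ⊆ ℝ^N` be open, `q ∈ [1,∞)`, `r ∈ (0,1)` and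
`u ∈ W^{r,q}_loc(Ω, ℝ^d)`. Then for every open `Ω₀` compactly contained in `Ω`,
`∫_{Ω₀} sup_{δ∈(0,∞)} ∫_{B_1(0)} χ_{Ω₀}(x+δz) |u(x+δz)−u(x)|^q/δ^{rq} dz dx < ∞`. -/
theorem frac_sobolev_sup_bound
    {N d : ℕ} {Ω : Set (Euc N)} (hΩ : IsOpen Ω)
    {q r : ℝ} (hq : 1 ≤ q) (hr0 : 0 < r) (hr1 : r < 1)
    (u : Euc N → Euc d)
    (hu : ∀ Ω₀ : Set (Euc N), IsOpen Ω₀ → IsCompact (closure Ω₀) → closure Ω₀ ⊆ Ω →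
      MemFracSobolev N d Ω₀ u r q) :
    ∀ Ω₀ : Set (Euc N), IsOpen Ω₀ → IsCompact (closure Ω₀) → closure Ω₀ ⊆ Ω →
      (∫⁻ x in Ω₀, ⨆ (δ : ℝ) (_ : 0 < δ),
          ∫⁻ z in ball (0 : Euc N) 1,
            Ω₀.indicator (fun _ => (1 : ℝ≥0∞)) (x + δ • z) *
              (‖u (x + δ • z) - u x‖₊ : ℝ≥0∞) ^ q / ENNReal.ofReal (δ ^ (r * q))) < ⊤ :=
  frac_sobolev_sup_bound_general hq hr0 u hu
end
end
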